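/- arXiv:2506.14971 — 8 statements merged into one kernel-verified Lean document; each statement's English description precedes it below -/
import Mathlib

section
/- Let f : [0,1] → [0,1] be a piecewise C¹ uniformly expanding Markov map with a singularity at p⁺ = x_j⁺ and no other singularities. Assume p⁺ is not periodic: for every n ≥ 1 there is no δ > 0 such that f^n is increasing on (p, p+δ) and lim_{x→p⁺} f^n(x) = p. Assume the continuous extension f̃_j of f to [p, x_{j+1}] is Hölder continuous, i.e. there exist C_H ≥ 1 and α > 1 with |f̃_j(x) − f̃_j(y)| ≤ C_H |x − y|^{1/α} for all x, y ∈ [p, x_{j+1}]. Then every f-invariant Borel probability measure μ on [0,1] satisfies ∫_{(p,1]} |log(x−p)| dμ(x) < ∞, i.e. every invariant measure is adapted with respect to p. -/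
open Set Filter MeasureTheory Topology
open scoped ENNReal

/-- A piecewise `C¹` uniformly expanding Markov map of `[0,1]`:
partition points `pt 0 = 0 < pt 1 < … < pt m = 1`, the map `f` is `C¹` with
`|f'| ≥ lam > 1` on the interior of each partition interval, each branch extends to a
continuous strictly monotone map `br i` of the closed interval, `f` agrees with a one-sided
limit at partition points, and each branch image is a union of partition intervals. -/
structure PCMarkovMap where
  m : ℕ
  hm : 1 ≤ m
  pt : ℕ → ℝ
  pt0 : pt 0 = 0
  ptm : pt m = 1
  pt_lt : ∀ i, i < m → pt i < pt (i + 1)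
  f : ℝ → ℝ
  f_maps : ∀ y ∈ Icc (0:ℝ) 1, f y ∈ Icc (0:ℝ) 1
  lam : ℝ
  lam_gt : 1 < lam
  f_c1 : ∀ i, i < m → ContDiffOn ℝ 1 f (Ioo (pt i) (pt (i + 1)))
  f_exp : ∀ i, i < m → ∀ y ∈ Ioo (pt i) (pt (i + 1)), lam ≤ |deriv f y|
  br : ℕ → ℝ → ℝ
  br_cont : ∀ i, i < m → ContinuousOn (br i) (Icc (pt i) (pt (i + 1)))
  br_mono : ∀ i, i < m →
    StrictMonoOn (br i) (Icc (pt i) (pt (i + 1))) ∨ StrictAntiOn (br i) (Icc (pt i) (pt (i + 1)))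
  br_eq_f : ∀ i, i < m → ∀ y ∈ Ioo (pt i) (pt (i + 1)), br i y = f y
  f_endpoint : ∀ i, i ≤ m →
    (i < m ∧ f (pt i) = br i (pt i)) ∨ (1 ≤ i ∧ f (pt i) = br (i - 1) (pt i))
  markov : ∀ i, i < m → ∃ S : Finset ℕ, (∀ j ∈ S, j < m) ∧
    br i '' Icc (pt i) (pt (i + 1)) = ⋃ j ∈ S, Icc (pt j) (pt (j + 1))

namespace PCMarkovMap
variable (T : PCMarkovMap)

/-- The set of partition points. -/
def ptSet : Set ℝ := {y | ∃ i ≤ T.m, y = T.pt i}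

/-- Transitivity: every interior partition interval eventually visits every other. -/
def Transitive : Prop :=
  ∀ i j, i < T.m → j < T.m →
    ∃ n : ℕ, ((T.f^[n]) ⁻¹' Ioo (T.pt j) (T.pt (j + 1)) ∩ Ioo (T.pt i) (T.pt (i + 1))).Nonempty

/-- The dynamical `n`-cylinder of a word `w`. -/
def cyl (n : ℕ) (w : ℕ → ℕ) : Set ℝ :=
  ⋂ k ∈ Finset.range n, (T.f^[k]) ⁻¹' Ioo (T.pt (w k)) (T.pt (w k + 1))

/-- `μ` satisfies Gibbs bounds with parameter `h`:
`c₁ e^{-nh} ≤ μ(C_w) ≤ c₂ e^{-nh}` for every nonempty dynamical `n`-cylinder. -/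
def Gibbs (μ : Measure ℝ) (h : ℝ) : Prop :=
  ∃ c₁ c₂ : ℝ, 0 < c₁ ∧ 0 < c₂ ∧ ∀ n : ℕ, 1 ≤ n → ∀ w : ℕ → ℕ,
    (∀ k, k < n → w k < T.m) → (T.cyl n w).Nonempty →
      ENNReal.ofReal (c₁ * Real.exp (-(n : ℝ) * h)) ≤ μ (T.cyl n w) ∧
      μ (T.cyl n w) ≤ ENNReal.ofReal (c₂ * Real.exp (-(n : ℝ) * h))

/-- `f`-invariance of a measure. -/
def Invariant (μ : Measure ℝ) : Prop :=
  ∀ s : Set ℝ, MeasurableSet s → μ (T.f ⁻¹' s) = μ s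

/-- No singularities away from `p⁺`: for every `δ' > 0`, `|f'|` is bounded on
`[0,1] \ (p, p+δ')` minus the partition points. -/
def NoSingularitiesOff (p : ℝ) : Prop :=
  ∀ δ' : ℝ, 0 < δ' → ∃ M : ℝ, ∀ y ∈ (Icc (0:ℝ) 1 \ Ioo p (p + δ')) \ T.ptSet, |deriv T.f y| ≤ M

/-- A singularity at `p⁺`: `limsup_{y → p⁺} |f'(y)| = ∞`. -/
def SingularAt (p : ℝ) : Prop :=
  ∀ M : ℝ, ∃ᶠ y in 𝓝[>] p, M ≤ |deriv T.f y|

end PCMarkovMap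

/-- `f^n` is increasing on a right neighborhood of `p` and `f^n(x) → p` as `x → p⁺`. -/
def PerSingAux (f : ℝ → ℝ) (p : ℝ) (n : ℕ) : Prop :=
  ∃ δ : ℝ, 0 < δ ∧ StrictMonoOn (f^[n]) (Ioo p (p + δ)) ∧
    Tendsto (f^[n]) (𝓝[>] p) (𝓝 p)

namespace AdaptedProof

variable (T : PCMarkovMap)

lemma pt_mono {a b : ℕ} (hab : a ≤ b) (hb : b ≤ T.m) : T.pt a ≤ T.pt b := by
  induction b with
  | zero => simp_all
  | succ n ih =>
    rcases Nat.lt_or_ge a (n+1) with h | h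
    · exact le_trans (ih (Nat.lt_succ_iff.mp h) (by omega)) (le_of_lt (T.pt_lt n (by omega)))
    · have : a = n+1 := le_antisymm hab h
      simp [this]

lemma pt_strict {a b : ℕ} (hab : a < b) (hb : b ≤ T.m) : T.pt a < T.pt b :=
  lt_of_lt_of_le (T.pt_lt a (by omega)) (pt_mono T (by omega) hb)

lemma pt_gap {g : ℝ} (hg : ∀ i, i < T.m → g + T.pt i ≤ T.pt (i+1)) {a b : ℕ}
    (hab : a < b) (hb : b ≤ T.m) : T.pt a + g ≤ T.pt b :=
  calc T.pt a + g = g + T.pt a := add_comm _ _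
  _ ≤ T.pt (a+1) := hg a (by omega)
  _ ≤ T.pt b := pt_mono T (by omega) hb

lemma eq_pt_of_extreme {i : ℕ} (hi : i < T.m) {q : ℝ}
    (hq : q ∈ T.br i '' Icc (T.pt i) (T.pt (i+1)))
    (hext : (∀ z ∈ T.br i '' Icc (T.pt i) (T.pt (i+1)), q ≤ z) ∨
            (∀ z ∈ T.br i '' Icc (T.pt i) (T.pt (i+1)), z ≤ q)) :
    ∃ k ≤ T.m, q = T.pt k := by
  obtain ⟨S, hS, himg⟩ := T.markov i hi
  rw [himg, mem_iUnion₂] at hq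
  obtain ⟨l, hlS, hql⟩ := hq
  have hlm : l < T.m := hS l hlS
  have hl : T.pt l ∈ T.br i '' Icc (T.pt i) (T.pt (i+1)) := by
    rw [himg]; exact mem_iUnion₂.2 ⟨l, hlS, le_rfl, le_of_lt (T.pt_lt l hlm)⟩
  have hl1 : T.pt (l+1) ∈ T.br i '' Icc (T.pt i) (T.pt (i+1)) := by
    rw [himg]; exact mem_iUnion₂.2 ⟨l, hlS, le_of_lt (T.pt_lt l hlm), le_rfl⟩
  rcases hext with hmin | hmax
  · exact ⟨l, le_of_lt hlm, le_antisymm (hmin _ hl) hql.1⟩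
  · exact ⟨l+1, hlm, le_antisymm hql.2 (hmax _ hl1)⟩

lemma endpoint_left {i : ℕ} (hi : i < T.m) : ∃ k ≤ T.m, T.br i (T.pt i) = T.pt k := by
  have hmem : T.pt i ∈ Icc (T.pt i) (T.pt (i+1)) := ⟨le_rfl, le_of_lt (T.pt_lt i hi)⟩
  refine eq_pt_of_extreme T hi (mem_image_of_mem _ hmem) ?_
  rcases T.br_mono i hi with h | h
  · left; rintro z ⟨w, hw, rfl⟩; exact h.monotoneOn hmem hw hw.1
  · right; rintro z ⟨w, hw, rfl⟩; exact h.antitoneOn hmem hw hw.1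

lemma endpoint_right {i : ℕ} (hi : i < T.m) : ∃ k ≤ T.m, T.br i (T.pt (i+1)) = T.pt k := by
  have hmem : T.pt (i+1) ∈ Icc (T.pt i) (T.pt (i+1)) := ⟨le_of_lt (T.pt_lt i hi), le_rfl⟩
  refine eq_pt_of_extreme T hi (mem_image_of_mem _ hmem) ?_
  rcases T.br_mono i hi with h | h
  · right; rintro z ⟨w, hw, rfl⟩; exact h.monotoneOn hw hmem hw.2
  · left; rintro z ⟨w, hw, rfl⟩; exact h.antitoneOn hw hmem hw.2

lemma orbit_mem {x : ℝ} (hx : x ∈ Icc (0:ℝ) 1) (n : ℕ) : T.f^[n] x ∈ Icc (0:ℝ) 1 := by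
  induction n with
  | zero => simpa
  | succ n ih => rw [Function.iterate_succ_apply']; exact T.f_maps _ ih

lemma cover {x : ℝ} (hx : x ∈ Icc (0:ℝ) 1) :
    (∃ i, i < T.m ∧ x ∈ Ioo (T.pt i) (T.pt (i+1))) ∨ (∃ i, i ≤ T.m ∧ x = T.pt i) := by
  classical
  by_cases hcase : ∃ i, i ≤ T.m ∧ x = T.pt i
  · exact Or.inr hcase
  push_neg at hcase
  left
  set P : ℕ → Prop := fun i => T.pt i ≤ x with hP
  have hP0 : P 0 := by rw [hP]; simp only [T.pt0]; exact hx.1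
  set i₀ := Nat.findGreatest P T.m with hi₀
  have hle : T.pt i₀ ≤ x := Nat.findGreatest_spec (Nat.zero_le _) hP0
  have hi₀m : i₀ ≤ T.m := Nat.findGreatest_le _
  have hne : x ≠ T.pt i₀ := hcase i₀ hi₀m
  have hlt : T.pt i₀ < x := lt_of_le_of_ne hle (fun h => hne h.symm)
  have hi₀lt : i₀ < T.m := by
    rcases Nat.lt_or_ge i₀ T.m with h | h
    · exact h
    · exfalso
      have : i₀ = T.m := le_antisymm hi₀m h
      rw [this, T.ptm] at hlt
      exact absurd hx.2 (not_le.2 hlt)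
  refine ⟨i₀, hi₀lt, hlt, ?_⟩
  by_contra hcon
  push_neg at hcon
  exact Nat.findGreatest_is_greatest (Nat.lt_succ_self i₀) (by omega) hcon

lemma meas_inter_preimage {S : Set ℝ} (hS : MeasurableSet S) :
    MeasurableSet (Icc (0:ℝ) 1 ∩ T.f ⁻¹' S) := by
  have hpiece : ∀ i, i < T.m → MeasurableSet (Ioo (T.pt i) (T.pt (i+1)) ∩ T.f ⁻¹' S) := by
    intro i hi
    have hc : Continuous ((Ioo (T.pt i) (T.pt (i+1))).restrict T.f) :=
      ContinuousOn.restrict (T.f_c1 i hi).continuousOn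
    have hms : MeasurableSet (((Ioo (T.pt i) (T.pt (i+1))).restrict T.f) ⁻¹' S) :=
      hc.measurable hS
    have himg := (MeasurableEmbedding.subtype_coe
      (measurableSet_Ioo (a := T.pt i) (b := T.pt (i+1)))).measurableSet_image' hms
    convert himg using 1
    ext x
    constructor
    · rintro ⟨hx1, hx2⟩; exact ⟨⟨x, hx1⟩, hx2, rfl⟩
    · rintro ⟨⟨y, hy⟩, hyS, rfl⟩; exact ⟨hy, hyS⟩
  have hcov : Icc (0:ℝ) 1 ∩ T.f ⁻¹' S =
      (⋃ i ∈ Finset.range T.m, (Ioo (T.pt i) (T.pt (i+1)) ∩ T.f ⁻¹' S)) ∪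
      ((⋃ i ∈ Finset.range (T.m+1), {T.pt i}) ∩ (Icc (0:ℝ) 1 ∩ T.f ⁻¹' S)) := by
    apply Subset.antisymm
    · rintro x ⟨hx1, hx2⟩
      rcases cover T hx1 with ⟨i, him, hio⟩ | ⟨i, him, rfl⟩
      · exact Or.inl (mem_iUnion₂.2 ⟨i, Finset.mem_range.2 him, hio, hx2⟩)
      · exact Or.inr ⟨mem_iUnion₂.2 ⟨i, Finset.mem_range.2 (by omega), rfl⟩, hx1, hx2⟩
    · rintro x (hx | hx)
      · rw [mem_iUnion₂] at hx
        obtain ⟨i, hi, hxi, hxS⟩ := hx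
        have him := Finset.mem_range.1 hi
        refine ⟨⟨?_, ?_⟩, hxS⟩
        · calc (0:ℝ) = T.pt 0 := T.pt0.symm
            _ ≤ T.pt i := pt_mono T (Nat.zero_le _) (le_of_lt him)
            _ ≤ x := le_of_lt hxi.1
        · calc x ≤ T.pt (i+1) := le_of_lt hxi.2
            _ ≤ T.pt T.m := pt_mono T him le_rfl
            _ = 1 := T.ptm
      · exact hx.2
  rw [hcov]
  refine MeasurableSet.union ?_ ?_
  · exact MeasurableSet.biUnion (Finset.range T.m).countable_toSet
      (fun i hi => hpiece i (Finset.mem_range.1 hi))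
  · refine Set.Countable.measurableSet ?_
    refine Set.Countable.mono (inter_subset_left) ?_
    exact Set.Countable.biUnion (Finset.range (T.m+1)).countable_toSet
      (fun i _ => countable_singleton _)


/-- Mean value bound away from the singular zone. -/
lemma lip (p gq M : ℝ)
    (hM : ∀ y ∈ (Icc (0:ℝ) 1 \ Ioo p (p + gq)) \ T.ptSet, |deriv T.f y| ≤ M)
    {i : ℕ} (hi : i < T.m) {a b : ℝ} (hab : a < b)
    (ha : T.pt i ≤ a) (hb : b ≤ T.pt (i+1))
    (hdisj : Ioo a b ∩ Ioo p (p + gq) = ∅) :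
    |T.br i b - T.br i a| ≤ M * (b - a) := by
  have hsub : Icc a b ⊆ Icc (T.pt i) (T.pt (i+1)) := Icc_subset_Icc ha hb
  have hsub' : Ioo a b ⊆ Ioo (T.pt i) (T.pt (i+1)) := Ioo_subset_Ioo ha hb
  have hcont : ContinuousOn (T.br i) (Icc a b) := (T.br_cont i hi).mono hsub
  have hderiv : ∀ y ∈ Ioo a b, HasDerivAt (T.br i) (deriv T.f y) y := by
    intro y hy
    have hyO : y ∈ Ioo (T.pt i) (T.pt (i+1)) := hsub' hy
    have hdf : DifferentiableAt ℝ T.f y :=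
      ((T.f_c1 i hi).differentiableOn one_ne_zero).differentiableAt (isOpen_Ioo.mem_nhds hyO)
    apply hdf.hasDerivAt.congr_of_eventuallyEq
    filter_upwards [isOpen_Ioo.mem_nhds hyO] with z hz
    exact T.br_eq_f i hi z hz
  obtain ⟨c, hc, hslope⟩ := exists_hasDerivAt_eq_slope (T.br i) (deriv T.f) hab hcont hderiv
  have hcI : c ∈ Ioo (T.pt i) (T.pt (i+1)) := hsub' hc
  have hcM : |deriv T.f c| ≤ M := by
    apply hM
    refine ⟨⟨⟨?_, ?_⟩, ?_⟩, ?_⟩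
    · calc (0:ℝ) = T.pt 0 := T.pt0.symm
        _ ≤ T.pt i := pt_mono T (Nat.zero_le _) (le_of_lt hi)
        _ ≤ c := le_of_lt hcI.1
    · calc c ≤ T.pt (i+1) := le_of_lt hcI.2
        _ ≤ T.pt T.m := pt_mono T hi le_rfl
        _ = 1 := T.ptm
    · intro hcmem
      have : c ∈ Ioo a b ∩ Ioo p (p + gq) := ⟨hc, hcmem⟩
      rw [hdisj] at this
      exact this
    · rintro ⟨k, hkm, hck⟩
      rcases Nat.lt_or_ge k (i+1) with h | h
      · have : T.pt k ≤ T.pt i := pt_mono T (by omega) (le_of_lt hi)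
        rw [← hck] at this
        exact absurd hcI.1 (not_lt.2 this)
      · have : T.pt (i+1) ≤ T.pt k := pt_mono T h hkm
        rw [← hck] at this
        exact absurd hcI.2 (not_lt.2 this)
  have hba : (0:ℝ) < b - a := sub_pos.2 hab
  have : T.br i b - T.br i a = deriv T.f c * (b - a) := by
    field_simp at hslope
    linarith [hslope]
  rw [this, abs_mul, abs_of_pos hba]
  exact mul_le_mul_of_nonneg_right hcM (le_of_lt hba)

end AdaptedProof

/-- The scale of admissible neighborhoods at step `n`. -/
noncomputable def AdaptedProof.eps (pQ g CH M α : ℝ) (n : ℕ) : ℝ :=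
  min pQ ((g / (4*CH*M^n)) ^ α)

namespace AdaptedProof

lemma eps_pos {pQ g CH M α : ℝ} (hpQ : 0 < pQ) (hg : 0 < g) (hCH : 1 ≤ CH) (hM : 2 ≤ M)
    (n : ℕ) : 0 < eps pQ g CH M α n := by
  have hM0 : (0:ℝ) < M := by linarith
  have h1 : (0:ℝ) < g / (4*CH*M^n) := by positivity
  exact lt_min hpQ (Real.rpow_pos_of_pos h1 _)

lemma eps_anti {pQ g CH M α : ℝ} (hg : 0 < g) (hCH : 1 ≤ CH) (hM : 2 ≤ M) (hα : 1 < α)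
    (n : ℕ) : eps pQ g CH M α (n+1) ≤ eps pQ g CH M α n := by
  have hM0 : (0:ℝ) < M := by linarith
  apply min_le_min le_rfl
  apply Real.rpow_le_rpow (by positivity) ?_ (by linarith)
  apply div_le_div_of_nonneg_left (le_of_lt hg) (by positivity)
  have : M^n ≤ M^(n+1) := pow_le_pow_right₀ (by linarith) (Nat.le_succ n)
  nlinarith [pow_pos hM0 n]

lemma regime {pQ g CH M α : ℝ} (hg : 0 < g) (hCH : 1 ≤ CH) (hM : 2 ≤ M) (hα : 1 < α)
    (n : ℕ) {t : ℝ} (ht0 : 0 < t) (ht : t < eps pQ g CH M α n) :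
    CH * M^n * t^(1/α) < g/4 := by
  have hM0 : (0:ℝ) < M := by linarith
  have hc : 0 < g/(4*CH*M^n) := by positivity
  have ht2 : t < (g/(4*CH*M^n))^α := lt_of_lt_of_le ht (min_le_right _ _)
  have h3 : t^(1/α) < ((g/(4*CH*M^n))^α)^(1/α) :=
    Real.rpow_lt_rpow (le_of_lt ht0) ht2 (by positivity)
  rw [← Real.rpow_mul (le_of_lt hc)] at h3
  have hαne : α * (1/α) = 1 := by field_simp
  rw [hαne, Real.rpow_one] at h3
  calc CH*M^n*t^(1/α) < CH*M^n*(g/(4*CH*M^n)) := by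
        apply mul_lt_mul_of_pos_left h3 (by positivity)
    _ = g/4 := by field_simp

/-- Non-periodicity rules out the singular state returning to `(p, +)`. -/
lemma noret (T : PCMarkovMap) {p : ℝ}
    (hnonper : ∀ n : ℕ, 1 ≤ n → ¬ PerSingAux T.f p n)
    {n : ℕ} {δ c α : ℝ} (hδ : 0 < δ) (hc : 0 < c) (hα : 1 < α)
    (hlow : ∀ x ∈ Ioo p (p+δ), p < T.f^[n+1] x)
    (hupp : ∀ x ∈ Ioo p (p+δ), T.f^[n+1] x ≤ p + c * (x-p)^(1/α))
    (hmono : StrictMonoOn (T.f^[n+1]) (Ioo p (p+δ)) ∨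
      StrictAntiOn (T.f^[n+1]) (Ioo p (p+δ))) :
    False := by
  have h1α : 0 < 1/α := by positivity
  have htend : Tendsto (fun x => p + c*(x-p)^(1/α)) (𝓝[>] p) (𝓝 p) := by
    have h0 : Tendsto (fun x : ℝ => x - p) (𝓝[>] p) (𝓝 0) := by
      have : Tendsto (fun x : ℝ => x - p) (𝓝 p) (𝓝 0) := by
        have := (continuous_id.sub (continuous_const (y := p))).tendsto p
        simpa [Pi.sub_def] using this
      exact this.mono_left nhdsWithin_le_nhds
    have h1 : Tendsto (fun t : ℝ => t ^ (1/α)) (𝓝 0) (𝓝 0) := by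
      have h := (Real.continuousAt_rpow_const 0 (1/α) (Or.inr (le_of_lt h1α))).tendsto
      simpa [one_div, Real.zero_rpow (show α⁻¹ ≠ 0 by positivity)] using h
    have h2 : Tendsto (fun x => (x-p)^(1/α)) (𝓝[>]p) (𝓝 0) := h1.comp h0
    have h3 : Tendsto (fun x => p + c*(x-p)^(1/α)) (𝓝[>]p) (𝓝 (p + c*0)) :=
      tendsto_const_nhds.add (tendsto_const_nhds.mul h2)
    simpa using h3
  have hmem : Ioo p (p+δ) ∈ 𝓝[>] p := Ioo_mem_nhdsGT_of_mem ⟨le_rfl, by linarith⟩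
  have htendF : Tendsto (T.f^[n+1]) (𝓝[>]p) (𝓝 p) := by
    apply tendsto_of_tendsto_of_tendsto_of_le_of_le' tendsto_const_nhds htend
    · filter_upwards [hmem] with x hx; exact le_of_lt (hlow x hx)
    · filter_upwards [hmem] with x hx; exact hupp x hx
  have hmono' : StrictMonoOn (T.f^[n+1]) (Ioo p (p+δ)) := by
    rcases hmono with h | h
    · exact h
    · exfalso
      have hx₁m : p + δ/2 ∈ Ioo p (p+δ) := by constructor <;> simp <;> linarith
      set x₁ := p + δ/2 with hx₁
      have hcpos : 0 < T.f^[n+1] x₁ - p := sub_pos.2 (hlow x₁ hx₁m)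
      set d := ((T.f^[n+1] x₁ - p)/c)^α with hd
      have hdpos : 0 < d := Real.rpow_pos_of_pos (by positivity) _
      set r := min (δ/4) (min (d/2) (δ/8)) with hr
      have hrpos : 0 < r := by
        apply lt_min (by linarith) (lt_min (by linarith) (by linarith))
      set x₂ := p + r with hx₂
      have hx₂m : x₂ ∈ Ioo p (p+δ) := by
        constructor
        · simp [hx₂]; linarith
        · have : r ≤ δ/4 := min_le_left _ _
          simp only [hx₂]; linarith
      have hx₂₁ : x₂ < x₁ := by
        have : r ≤ δ/8 := le_trans (min_le_right _ _) (min_le_right _ _)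
        simp only [hx₂, hx₁]; linarith
      have hcontr := h hx₂m hx₁m hx₂₁
      have hx₂p : x₂ - p = r := by simp [hx₂]
      have hrd : r < d := lt_of_le_of_lt (le_trans (min_le_right _ _) (min_le_left _ _))
        (by linarith)
      have hb : (x₂ - p) ^ (1/α) < d ^ (1/α) := by
        rw [hx₂p]; exact Real.rpow_lt_rpow (le_of_lt hrpos) hrd h1α
      have hdval : d^(1/α) = (T.f^[n+1] x₁ - p)/c := by
        rw [hd, ← Real.rpow_mul (by positivity)]
        have : α * (1/α) = 1 := by field_simp
        rw [this, Real.rpow_one]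
      have hup2 := hupp x₂ hx₂m
      rw [hdval] at hb
      have : T.f^[n+1] x₂ < T.f^[n+1] x₁ := by
        calc T.f^[n+1] x₂ ≤ p + c * (x₂-p)^(1/α) := hup2
          _ < p + c * ((T.f^[n+1] x₁ - p)/c) := by
              apply add_lt_add_of_le_of_lt le_rfl
              exact mul_lt_mul_of_pos_left hb hc
          _ = T.f^[n+1] x₁ := by field_simp; ring
      linarith
  exact hnonper (n+1) (by omega) ⟨δ, hδ, hmono', htendF⟩

/-- congruence helpers -/
lemma smo_congr {f g : ℝ → ℝ} {s : Set ℝ} (h : ∀ x ∈ s, f x = g x)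
    (hf : StrictMonoOn f s) : StrictMonoOn g s := by
  intro a ha b hb hab
  rw [← h a ha, ← h b hb]; exact hf ha hb hab

lemma sao_congr {f g : ℝ → ℝ} {s : Set ℝ} (h : ∀ x ∈ s, f x = g x)
    (hf : StrictAntiOn f s) : StrictAntiOn g s := by
  intro a ha b hb hab
  rw [← h a ha, ← h b hb]; exact hf ha hb hab

end AdaptedProof

namespace AdaptedProof

lemma eps_le_left (pQ g CH M α : ℝ) (n : ℕ) : eps pQ g CH M α n ≤ pQ := min_le_left _ _

lemma core (T : PCMarkovMap) {j : ℕ} (hj : j < T.m) {p : ℝ} (hp : p = T.pt j)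
    {CH α : ℝ} (hCH : 1 ≤ CH) (hα : 1 < α)
    (hHolder : ∀ x ∈ Icc p (T.pt (j + 1)), ∀ y ∈ Icc p (T.pt (j + 1)),
      |T.br j x - T.br j y| ≤ CH * |x - y| ^ (1 / α))
    (hnonper : ∀ n : ℕ, 1 ≤ n → ¬ PerSingAux T.f p n)
    {g : ℝ} (hgpos : 0 < g) (hg : ∀ i, i < T.m → g + T.pt i ≤ T.pt (i+1))
    {M : ℝ} (hM2 : 2 ≤ M)
    (hM : ∀ y ∈ (Icc (0:ℝ) 1 \ Ioo p (p + g/4)) \ T.ptSet, |deriv T.f y| ≤ M) :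
    ∀ n : ℕ, ∃ k, k ≤ T.m ∧ ∃ s : Bool,
      (∀ x ∈ Ioo p (p + eps (T.pt (j+1) - p) g CH M α (n+1)),
        (s = true → T.pt k < T.f^[n+1] x ∧
           T.f^[n+1] x ≤ T.pt k + CH * M^n * (x - p)^(1/α)) ∧
        (s = false → T.pt k - CH * M^n * (x - p)^(1/α) ≤ T.f^[n+1] x ∧
           T.f^[n+1] x < T.pt k)) ∧
      (StrictMonoOn (T.f^[n+1]) (Ioo p (p + eps (T.pt (j+1) - p) g CH M α (n+1))) ∨
       StrictAntiOn (T.f^[n+1]) (Ioo p (p + eps (T.pt (j+1) - p) g CH M α (n+1)))) := by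
  have hM0 : (0:ℝ) < M := by linarith
  have hCH0 : (0:ℝ) < CH := by linarith
  have hplt : p < T.pt (j+1) := by rw [hp]; exact T.pt_lt j hj
  have hpQ : 0 < T.pt (j+1) - p := sub_pos.2 hplt
  set pQ := T.pt (j+1) - p with hpQdef
  have hα0 : (0:ℝ) < 1/α := by positivity
  have hp0 : (0:ℝ) ≤ p := by
    rw [hp]
    calc (0:ℝ) = T.pt 0 := T.pt0.symm
      _ ≤ T.pt j := pt_mono T (Nat.zero_le _) (le_of_lt hj)
  have hptj1 : T.pt (j+1) ≤ 1 :=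
    calc T.pt (j+1) ≤ T.pt T.m := pt_mono T hj le_rfl
      _ = 1 := T.ptm
  have hmemE : ∀ n : ℕ, ∀ x ∈ Ioo p (p + eps pQ g CH M α n), x ∈ Icc (0:ℝ) 1 := by
    intro n x hx
    have h3 : eps pQ g CH M α n ≤ pQ := eps_le_left _ _ _ _ _ _
    have h2 : x < T.pt (j+1) := by
      have := hx.2
      simp only [hpQdef] at h3
      linarith
    exact ⟨le_trans hp0 (le_of_lt hx.1), le_trans (le_of_lt h2) hptj1⟩
  intro n
  induction n with
  | zero =>
    simp only [zero_add]
    obtain ⟨k, hk, hbrk⟩ := endpoint_left T hj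
    have hpIcc : T.pt j ∈ Icc (T.pt j) (T.pt (j+1)) := ⟨le_rfl, le_of_lt (T.pt_lt j hj)⟩
    have hIoosub : ∀ x ∈ Ioo p (p + eps pQ g CH M α 1), x ∈ Ioo (T.pt j) (T.pt (j+1)) := by
      intro x hx
      refine ⟨hp ▸ hx.1, ?_⟩
      have h3 : eps pQ g CH M α 1 ≤ pQ := eps_le_left _ _ _ _ _ _
      have := hx.2
      simp only [hpQdef] at h3
      linarith
    have hfeq : ∀ x ∈ Ioo p (p + eps pQ g CH M α 1), T.f^[1] x = T.br j x := by
      intro x hx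
      rw [Function.iterate_one]
      exact (T.br_eq_f j hj x (hIoosub x hx)).symm
    have hbrp : T.br j p = T.pt k := by rw [hp]; exact hbrk
    have hhold : ∀ x ∈ Ioo p (p + eps pQ g CH M α 1),
        |T.br j x - T.pt k| ≤ CH * M^0 * (x - p)^(1/α) := by
      intro x hx
      have hxI := hIoosub x hx
      have h1 := hHolder x ⟨le_of_lt hx.1, le_of_lt hxI.2⟩ p ⟨le_rfl, le_of_lt hplt⟩
      calc |T.br j x - T.pt k| = |T.br j x - T.br j p| := by rw [hbrp]
        _ ≤ CH * |x - p| ^ (1/α) := h1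
        _ = CH * M^0 * (x-p)^(1/α) := by
            rw [abs_of_pos (sub_pos.2 hx.1), pow_zero, mul_one]
    rcases T.br_mono j hj with hbm | hba
    · refine ⟨k, hk, true, ?_, ?_⟩
      · intro x hx
        refine ⟨fun _ => ?_, fun hff => by simp at hff⟩
        have hxI := hIoosub x hx
        have hxIcc : x ∈ Icc (T.pt j) (T.pt (j+1)) := ⟨le_of_lt hxI.1, le_of_lt hxI.2⟩
        have hlt : T.pt k < T.br j x := by
          rw [← hbrk]; exact hbm hpIcc hxIcc hxI.1
        have habs := hhold x hx
        rw [hfeq x hx]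
        exact ⟨hlt, by linarith [(abs_le.1 habs).2]⟩
      · left
        have hmono0 : StrictMonoOn (T.br j) (Ioo p (p + eps pQ g CH M α 1)) := by
          intro a ha b hb hab
          have haI := hIoosub a ha
          have hbI := hIoosub b hb
          exact hbm ⟨le_of_lt haI.1, le_of_lt haI.2⟩ ⟨le_of_lt hbI.1, le_of_lt hbI.2⟩ hab
        exact smo_congr (fun x hx => (hfeq x hx).symm) hmono0
    · refine ⟨k, hk, false, ?_, ?_⟩
      · intro x hx
        refine ⟨fun htt => by simp at htt, fun _ => ?_⟩
        have hxI := hIoosub x hx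
        have hxIcc : x ∈ Icc (T.pt j) (T.pt (j+1)) := ⟨le_of_lt hxI.1, le_of_lt hxI.2⟩
        have hlt : T.br j x < T.pt k := by
          rw [← hbrk]; exact hba hpIcc hxIcc hxI.1
        have habs := hhold x hx
        rw [hfeq x hx]
        exact ⟨by linarith [(abs_le.1 habs).1], hlt⟩
      · right
        have hanti0 : StrictAntiOn (T.br j) (Ioo p (p + eps pQ g CH M α 1)) := by
          intro a ha b hb hab
          have haI := hIoosub a ha
          have hbI := hIoosub b hb
          exact hba ⟨le_of_lt haI.1, le_of_lt haI.2⟩ ⟨le_of_lt hbI.1, le_of_lt hbI.2⟩ hab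
        exact sao_congr (fun x hx => (hfeq x hx).symm) hanti0
  | succ n ih =>
    obtain ⟨k, hk, s, hP, hmono⟩ := ih
    set En1 := eps pQ g CH M α (n+1) with hEn1
    set En2 := eps pQ g CH M α (n+1+1) with hEn2
    have hEn1pos : 0 < En1 := eps_pos hpQ hgpos hCH hM2 _
    have hEn2pos : 0 < En2 := eps_pos hpQ hgpos hCH hM2 _
    have hsub : Ioo p (p + En2) ⊆ Ioo p (p + En1) := by
      apply Ioo_subset_Ioo le_rfl
      have := eps_anti (pQ := pQ) hgpos hCH hM2 hα (n+1)
      simp only [← hEn1, ← hEn2] at this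
      linarith
    have hrfacts : ∀ x ∈ Ioo p (p + En2),
        0 < x - p ∧ CH * M^n * (x-p)^(1/α) < g/4 ∧
        M * (CH * M^n * (x-p)^(1/α)) = CH * M^(n+1) * (x-p)^(1/α) ∧
        CH * M^(n+1) * (x-p)^(1/α) < g/4 := by
      intro x hx
      have ht0 : 0 < x - p := sub_pos.2 hx.1
      have h2 : CH * M^(n+1+1) * (x-p)^(1/α) < g/4 :=
        regime (pQ := pQ) hgpos hCH hM2 hα (n+1+1) ht0 (by
          have := hx.2; simp only [hEn2] at this ⊢; linarith)
      have hrp : (0:ℝ) < (x-p)^(1/α) := Real.rpow_pos_of_pos ht0 _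
      have hmn : M^n ≤ M^(n+1+1) := pow_le_pow_right₀ (by linarith) (by omega)
      have hmn1 : M^(n+1) ≤ M^(n+1+1) := pow_le_pow_right₀ (by linarith) (by omega)
      refine ⟨ht0, ?_, by ring, ?_⟩
      · calc CH*M^n*(x-p)^(1/α) ≤ CH*M^(n+1+1)*(x-p)^(1/α) := by
              apply mul_le_mul_of_nonneg_right ?_ (le_of_lt hrp)
              exact mul_le_mul_of_nonneg_left hmn (le_of_lt hCH0)
          _ < g/4 := h2
      · calc CH*M^(n+1)*(x-p)^(1/α) ≤ CH*M^(n+1+1)*(x-p)^(1/α) := by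
              apply mul_le_mul_of_nonneg_right ?_ (le_of_lt hrp)
              exact mul_le_mul_of_nonneg_left hmn1 (le_of_lt hCH0)
          _ < g/4 := h2
    have hnot : ¬(k = j ∧ s = true) := by
      intro hand
      obtain ⟨hkj, hst⟩ := hand
      refine noret T hnonper hEn1pos (mul_pos hCH0 (pow_pos hM0 n)) hα ?_ ?_ hmono
      · intro x hx
        have h1 := ((hP x hx).1 hst).1
        rw [hkj, ← hp] at h1
        exact h1
      · intro x hx
        have h1 := ((hP x hx).1 hst).2
        rw [hkj, ← hp] at h1
        exact h1
    have hx₀ : p + En2/2 ∈ Ioo p (p + En2) := ⟨by linarith, by linarith⟩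
    have hy₀E : T.f^[n+1] (p + En2/2) ∈ Icc (0:ℝ) 1 :=
      orbit_mem T (hmemE _ _ (by simpa only [← hEn2] using hx₀)) (n+1)
    cases s with
    | true =>
      have hkj : k ≠ j := fun h => hnot ⟨h, rfl⟩
      have hy₀ := (hP _ (hsub hx₀)).1 rfl
      have hkm : k < T.m := by
        rcases lt_or_eq_of_le hk with h | h
        · exact h
        · exfalso; rw [h, T.ptm] at hy₀; linarith [hy₀.1, hy₀E.2]
      obtain ⟨k', hk', hbrk'⟩ := endpoint_left T hkm
      have hyI : ∀ x ∈ Ioo p (p + En2), T.f^[n+1] x ∈ Ioo (T.pt k) (T.pt (k+1)) := by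
        intro x hx
        have h1 := (hP x (hsub hx)).1 rfl
        obtain ⟨ht0, hr4, hmul, hr4'⟩ := hrfacts x hx
        have hgk := hg k hkm
        refine ⟨h1.1, ?_⟩
        calc T.f^[n+1] x ≤ T.pt k + CH*M^n*(x-p)^(1/α) := h1.2
          _ < T.pt (k+1) := by linarith
      have hstep : ∀ x ∈ Ioo p (p + En2), T.f^[n+1+1] x = T.br k (T.f^[n+1] x) := by
        intro x hx
        rw [Function.iterate_succ_apply']
        exact (T.br_eq_f k hkm _ (hyI x hx)).symm
      have hLip : ∀ x ∈ Ioo p (p + En2),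
          |T.br k (T.f^[n+1] x) - T.pt k'| ≤ CH * M^(n+1) * (x-p)^(1/α) := by
        intro x hx
        have h1 := (hP x (hsub hx)).1 rfl
        obtain ⟨ht0, hr4, hmul, hr4'⟩ := hrfacts x hx
        have hyIx := hyI x hx
        have hdisj : Ioo (T.pt k) (T.f^[n+1] x) ∩ Ioo p (p + g/4) = ∅ := by
          rcases lt_or_gt_of_ne hkj with hlt | hgt
          · have hgap : T.pt k + g ≤ T.pt j := pt_gap T hg hlt (le_of_lt hj)
            rw [Set.eq_empty_iff_forall_notMem]
            rintro z ⟨hz1, hz2⟩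
            have hub : T.f^[n+1] x ≤ T.pt k + g/4 := by linarith [h1.2]
            have hzp : z < p := by rw [hp]; linarith [hz1.2]
            linarith [hz2.1]
          · have hgap : T.pt j + g ≤ T.pt k := pt_gap T hg hgt hk
            rw [Set.eq_empty_iff_forall_notMem]
            rintro z ⟨hz1, hz2⟩
            have : p + g ≤ T.pt k := by rw [hp]; linarith
            linarith [hz1.1, hz2.2]
        have hl := lip T p (g/4) M hM hkm hyIx.1 le_rfl (le_of_lt hyIx.2) hdisj
        rw [← hbrk']
        calc |T.br k (T.f^[n+1] x) - T.br k (T.pt k)| ≤ M * (T.f^[n+1] x - T.pt k) := hl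
          _ ≤ M * (CH*M^n*(x-p)^(1/α)) := by
              apply mul_le_mul_of_nonneg_left ?_ (le_of_lt hM0)
              linarith [h1.2]
          _ = CH*M^(n+1)*(x-p)^(1/α) := hmul
      have hmapsTo : MapsTo (T.f^[n+1]) (Ioo p (p + En2)) (Icc (T.pt k) (T.pt (k+1))) :=
        fun x hx => ⟨le_of_lt (hyI x hx).1, le_of_lt (hyI x hx).2⟩
      have hIccL : T.pt k ∈ Icc (T.pt k) (T.pt (k+1)) := ⟨le_rfl, le_of_lt (T.pt_lt k hkm)⟩
      rcases T.br_mono k hkm with hbm | hba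
      · refine ⟨k', hk', true, ?_, ?_⟩
        · intro x hx
          refine ⟨fun _ => ?_, fun hff => by simp at hff⟩
          have hyIx := hyI x hx
          have hIccY : T.f^[n+1] x ∈ Icc (T.pt k) (T.pt (k+1)) := hmapsTo hx
          have hlt : T.pt k' < T.br k (T.f^[n+1] x) := by
            rw [← hbrk']; exact hbm hIccL hIccY hyIx.1
          have habs := hLip x hx
          rw [hstep x hx]
          exact ⟨hlt, by linarith [(abs_le.1 habs).2]⟩
        · rcases hmono with hm | ha
          · left
            exact smo_congr (fun x hx => (hstep x hx).symm)
              (StrictMonoOn.comp hbm (hm.mono hsub) hmapsTo)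
          · right
            exact sao_congr (fun x hx => (hstep x hx).symm)
              (StrictMonoOn.comp_strictAntiOn hbm (ha.mono hsub) hmapsTo)
      · refine ⟨k', hk', false, ?_, ?_⟩
        · intro x hx
          refine ⟨fun htt => by simp at htt, fun _ => ?_⟩
          have hyIx := hyI x hx
          have hIccY : T.f^[n+1] x ∈ Icc (T.pt k) (T.pt (k+1)) := hmapsTo hx
          have hlt : T.br k (T.f^[n+1] x) < T.pt k' := by
            rw [← hbrk']; exact hba hIccL hIccY hyIx.1
          have habs := hLip x hx
          rw [hstep x hx]
          exact ⟨by linarith [(abs_le.1 habs).1], hlt⟩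
        · rcases hmono with hm | ha
          · right
            exact sao_congr (fun x hx => (hstep x hx).symm)
              (StrictAntiOn.comp_strictMonoOn hba (hm.mono hsub) hmapsTo)
          · left
            exact smo_congr (fun x hx => (hstep x hx).symm)
              (StrictAntiOn.comp hba (ha.mono hsub) hmapsTo)
    | false =>
      have hy₀ := (hP _ (hsub hx₀)).2 rfl
      rcases k with _ | k₀
      · exfalso; rw [T.pt0] at hy₀; linarith [hy₀.2, hy₀E.1]
      have hk₀m : k₀ < T.m := by omega
      obtain ⟨k', hk', hbrk'⟩ := endpoint_right T hk₀m
      have hyI : ∀ x ∈ Ioo p (p + En2), T.f^[n+1] x ∈ Ioo (T.pt k₀) (T.pt (k₀+1)) := by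
        intro x hx
        have h1 := (hP x (hsub hx)).2 rfl
        obtain ⟨ht0, hr4, hmul, hr4'⟩ := hrfacts x hx
        have hgk := hg k₀ hk₀m
        refine ⟨?_, h1.2⟩
        calc T.pt k₀ ≤ T.pt (k₀+1) - g := by linarith
          _ < T.pt (k₀+1) - CH*M^n*(x-p)^(1/α) := by linarith
          _ ≤ T.f^[n+1] x := by linarith [h1.1]
      have hstep : ∀ x ∈ Ioo p (p + En2), T.f^[n+1+1] x = T.br k₀ (T.f^[n+1] x) := by
        intro x hx
        rw [Function.iterate_succ_apply']
        exact (T.br_eq_f k₀ hk₀m _ (hyI x hx)).symm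
      have hLip : ∀ x ∈ Ioo p (p + En2),
          |T.br k₀ (T.f^[n+1] x) - T.pt k'| ≤ CH * M^(n+1) * (x-p)^(1/α) := by
        intro x hx
        have h1 := (hP x (hsub hx)).2 rfl
        obtain ⟨ht0, hr4, hmul, hr4'⟩ := hrfacts x hx
        have hyIx := hyI x hx
        have hdisj : Ioo (T.f^[n+1] x) (T.pt (k₀+1)) ∩ Ioo p (p + g/4) = ∅ := by
          rcases Nat.lt_or_ge j (k₀+1) with hgt | hle
          · have hgap : T.pt j + g ≤ T.pt (k₀+1) := pt_gap T hg hgt hk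
            have hpj : T.pt j = p := hp.symm
            rw [hpj] at hgap
            rw [Set.eq_empty_iff_forall_notMem]
            rintro z ⟨hz1, hz2⟩
            linarith [hz1.1, hz2.2, h1.1]
          · have hle2 : T.pt (k₀+1) ≤ T.pt j := pt_mono T hle (le_of_lt hj)
            rw [Set.eq_empty_iff_forall_notMem]
            rintro z ⟨hz1, hz2⟩
            have : z < p := by rw [hp]; linarith [hz1.2]
            linarith [hz2.1]
        have hl := lip T p (g/4) M hM hk₀m h1.2 (le_of_lt hyIx.1) le_rfl hdisj
        rw [← hbrk']
        calc |T.br k₀ (T.f^[n+1] x) - T.br k₀ (T.pt (k₀+1))|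
            = |T.br k₀ (T.pt (k₀+1)) - T.br k₀ (T.f^[n+1] x)| := abs_sub_comm _ _
          _ ≤ M * (T.pt (k₀+1) - T.f^[n+1] x) := hl
          _ ≤ M * (CH*M^n*(x-p)^(1/α)) := by
              apply mul_le_mul_of_nonneg_left ?_ (le_of_lt hM0)
              linarith [h1.1]
          _ = CH*M^(n+1)*(x-p)^(1/α) := hmul
      have hmapsTo : MapsTo (T.f^[n+1]) (Ioo p (p + En2)) (Icc (T.pt k₀) (T.pt (k₀+1))) :=
        fun x hx => ⟨le_of_lt (hyI x hx).1, le_of_lt (hyI x hx).2⟩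
      have hIccR : T.pt (k₀+1) ∈ Icc (T.pt k₀) (T.pt (k₀+1)) :=
        ⟨le_of_lt (T.pt_lt k₀ hk₀m), le_rfl⟩
      rcases T.br_mono k₀ hk₀m with hbm | hba
      · refine ⟨k', hk', false, ?_, ?_⟩
        · intro x hx
          refine ⟨fun htt => by simp at htt, fun _ => ?_⟩
          have hyIx := hyI x hx
          have hIccY : T.f^[n+1] x ∈ Icc (T.pt k₀) (T.pt (k₀+1)) := hmapsTo hx
          have hlt : T.br k₀ (T.f^[n+1] x) < T.pt k' := by
            rw [← hbrk']; exact hbm hIccY hIccR hyIx.2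
          have habs := hLip x hx
          rw [hstep x hx]
          exact ⟨by linarith [(abs_le.1 habs).1], hlt⟩
        · rcases hmono with hm | ha
          · left
            exact smo_congr (fun x hx => (hstep x hx).symm)
              (StrictMonoOn.comp hbm (hm.mono hsub) hmapsTo)
          · right
            exact sao_congr (fun x hx => (hstep x hx).symm)
              (StrictMonoOn.comp_strictAntiOn hbm (ha.mono hsub) hmapsTo)
      · refine ⟨k', hk', true, ?_, ?_⟩
        · intro x hx
          refine ⟨fun _ => ?_, fun hff => by simp at hff⟩
          have hyIx := hyI x hx
          have hIccY : T.f^[n+1] x ∈ Icc (T.pt k₀) (T.pt (k₀+1)) := hmapsTo hx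
          have hlt : T.pt k' < T.br k₀ (T.f^[n+1] x) := by
            rw [← hbrk']; exact hba hIccY hIccR hyIx.2
          have habs := hLip x hx
          rw [hstep x hx]
          exact ⟨hlt, by linarith [(abs_le.1 habs).2]⟩
        · rcases hmono with hm | ha
          · right
            exact sao_congr (fun x hx => (hstep x hx).symm)
              (StrictAntiOn.comp_strictMonoOn hba (hm.mono hsub) hmapsTo)
          · left
            exact smo_congr (fun x hx => (hstep x hx).symm)
              (StrictAntiOn.comp hba (ha.mono hsub) hmapsTo)

end AdaptedProof

namespace AdaptedProof

lemma eps_mono {pQ g CH M α : ℝ} (hg : 0 < g) (hCH : 1 ≤ CH) (hM : 2 ≤ M) (hα : 1 < α)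
    {a b : ℕ} (hab : a ≤ b) : eps pQ g CH M α b ≤ eps pQ g CH M α a := by
  induction b with
  | zero => simp_all
  | succ n ihn =>
    rcases Nat.lt_or_ge a (n+1) with h | h
    · exact le_trans (eps_anti hg hCH hM hα n) (ihn (by omega))
    · have : a = n+1 := le_antisymm hab h
      simp [this]

lemma avoid (T : PCMarkovMap) {j : ℕ} (hj : j < T.m) {p : ℝ} (hp : p = T.pt j)
    {CH α : ℝ} (hCH : 1 ≤ CH) (hα : 1 < α)
    (hHolder : ∀ x ∈ Icc p (T.pt (j + 1)), ∀ y ∈ Icc p (T.pt (j + 1)),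
      |T.br j x - T.br j y| ≤ CH * |x - y| ^ (1 / α))
    (hnonper : ∀ n : ℕ, 1 ≤ n → ¬ PerSingAux T.f p n)
    {g : ℝ} (hgpos : 0 < g) (hg : ∀ i, i < T.m → g + T.pt i ≤ T.pt (i+1))
    {M : ℝ} (hM2 : 2 ≤ M)
    (hM : ∀ y ∈ (Icc (0:ℝ) 1 \ Ioo p (p + g/4)) \ T.ptSet, |deriv T.f y| ≤ M) :
    ∀ n : ℕ, ∀ x ∈ Ioo p (p + eps (T.pt (j+1) - p) g CH M α (n+1)),
      T.f^[n+1] x ∉ Ioo p (p + g/4) := by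
  have hM0 : (0:ℝ) < M := by linarith
  have hCH0 : (0:ℝ) < CH := by linarith
  intro n x hx hmem
  obtain ⟨k, hk, s, hP, hmono⟩ := core T hj hp hCH hα hHolder hnonper hgpos hg hM2 hM n
  have hnot : ¬(k = j ∧ s = true) := by
    intro hand
    obtain ⟨hkj, hst⟩ := hand
    refine noret T hnonper (eps_pos (sub_pos.2 (by rw [hp]; exact T.pt_lt j hj)) hgpos hCH hM2 (n+1))
      (mul_pos hCH0 (pow_pos hM0 n)) hα ?_ ?_ hmono
    · intro z hz
      have h1 := ((hP z hz).1 hst).1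
      rw [hkj, ← hp] at h1
      exact h1
    · intro z hz
      have h1 := ((hP z hz).1 hst).2
      rw [hkj, ← hp] at h1
      exact h1
  have ht0 : 0 < x - p := sub_pos.2 hx.1
  have hrp : (0:ℝ) < (x-p)^(1/α) := Real.rpow_pos_of_pos ht0 _
  have h2 : CH * M^(n+1) * (x-p)^(1/α) < g/4 :=
    regime hgpos hCH hM2 hα (n+1) ht0 (by linarith [hx.2])
  have hr4 : CH * M^n * (x-p)^(1/α) < g/4 := by
    have hmn : M^n ≤ M^(n+1) := pow_le_pow_right₀ (by linarith) (by omega)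
    calc CH*M^n*(x-p)^(1/α) ≤ CH*M^(n+1)*(x-p)^(1/α) := by
          apply mul_le_mul_of_nonneg_right ?_ (le_of_lt hrp)
          exact mul_le_mul_of_nonneg_left hmn (le_of_lt hCH0)
      _ < g/4 := h2
  cases s with
  | true =>
    have hkj : k ≠ j := fun h => hnot ⟨h, rfl⟩
    have h1 := (hP x hx).1 rfl
    rcases lt_or_gt_of_ne hkj with hlt | hgt
    · have hgap : T.pt k + g ≤ T.pt j := pt_gap T hg hlt (le_of_lt hj)
      have : T.f^[n+1] x < p := by
        rw [hp]; linarith [h1.2]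
      linarith [hmem.1]
    · have hgap : T.pt j + g ≤ T.pt k := pt_gap T hg hgt hk
      have : p + g ≤ T.pt k := by rw [hp]; linarith
      linarith [h1.1, hmem.2]
  | false =>
    have h1 := (hP x hx).2 rfl
    rcases Nat.lt_or_ge j k with hgt | hle
    · have hgap : T.pt j + g ≤ T.pt k := pt_gap T hg hgt hk
      have : p + g ≤ T.pt k := by rw [hp]; linarith
      linarith [h1.1, hmem.2]
    · have hle2 : T.pt k ≤ T.pt j := pt_mono T hle (le_of_lt hj)
      have : T.f^[n+1] x < p := by rw [hp]; linarith [h1.2]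
      linarith [hmem.1]

/-- The sets of points whose orbit stays in `[0,1] \ A` for the first `k` steps. -/
def Gset (T : PCMarkovMap) (A : Set ℝ) : ℕ → Set ℝ
  | 0 => Icc 0 1
  | (k+1) => (Icc (0:ℝ) 1 \ A) ∩ T.f ⁻¹' (Gset T A k)

lemma Gset_subset (T : PCMarkovMap) (A : Set ℝ) : ∀ k, Gset T A k ⊆ Icc (0:ℝ) 1 := by
  intro k
  cases k with
  | zero => exact subset_rfl
  | succ k => exact fun x hx => hx.1.1

lemma Gset_meas (T : PCMarkovMap) {A : Set ℝ} (hA : MeasurableSet A) :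
    ∀ k, MeasurableSet (Gset T A k) := by
  intro k
  induction k with
  | zero => exact measurableSet_Icc
  | succ k ihk =>
    have heq : Gset T A (k+1) =
        (Icc (0:ℝ) 1 \ A) ∩ (Icc (0:ℝ) 1 ∩ T.f ⁻¹' (Gset T A k)) := by
      ext z
      constructor
      · rintro ⟨h1, h2⟩; exact ⟨h1, h1.1, h2⟩
      · rintro ⟨h1, _, h2⟩; exact ⟨h1, h2⟩
    rw [heq]
    exact (measurableSet_Icc.diff hA).inter (meas_inter_preimage T ihk)

lemma Gset_mem (T : PCMarkovMap) (A : Set ℝ) :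
    ∀ k (z : ℝ), (∀ i, i < k → T.f^[i] z ∈ Icc (0:ℝ) 1 \ A) →
      T.f^[k] z ∈ Icc (0:ℝ) 1 → z ∈ Gset T A k := by
  intro k
  induction k with
  | zero => intro z _ h; exact h
  | succ k ihk =>
    intro z h1 h2
    refine ⟨by simpa using h1 0 (by omega), ?_⟩
    refine ihk (T.f z) (fun i hi => ?_) ?_
    · have := h1 (i+1) (by omega)
      rwa [Function.iterate_succ_apply] at this
    · rwa [Function.iterate_succ_apply] at h2

/-- The Kac-type inequality: the sum of the measures of sets with long
return time to `A` is at most `1`. -/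
lemma kac (T : PCMarkovMap) (μ : Measure ℝ) [IsProbabilityMeasure μ] (hinv : T.Invariant μ)
    {A : Set ℝ} (hA : MeasurableSet A) (hAE : A ⊆ Icc (0:ℝ) 1)
    (B : ℕ → Set ℝ) (hB : ∀ k, B k ⊆ A)
    (hBav : ∀ k : ℕ, ∀ x ∈ B k, ∀ l, 1 ≤ l → l ≤ k → T.f^[l] x ∉ A) :
    ∑' k : ℕ, μ (B (k+1)) ≤ 1 := by
  set E : Set ℝ := Icc (0:ℝ) 1 with hE
  have hEmeas : MeasurableSet E := measurableSet_Icc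
  have hEsub : E ⊆ T.f ⁻¹' E := fun x hx => T.f_maps x hx
  have hnull : μ (T.f ⁻¹' E \ E) = 0 := by
    have h1 := hinv E hEmeas
    have h2 := measure_inter_add_diff (μ := μ) (T.f ⁻¹' E) hEmeas
    rw [Set.inter_eq_right.2 hEsub] at h2
    rw [h1] at h2
    have h4 : μ E + μ (T.f ⁻¹' E \ E) = μ E + 0 := by rw [add_zero]; exact h2
    exact (ENNReal.add_right_inj (measure_ne_top μ _)).1 h4
  have claim1 : ∀ S : Set ℝ, MeasurableSet S → S ⊆ E → μ (E ∩ T.f ⁻¹' S) = μ S := by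
    intro S hS hSE
    have h1 := hinv S hS
    have h2 := measure_inter_add_diff (μ := μ) (T.f ⁻¹' S) hEmeas
    have h3 : μ (T.f ⁻¹' S \ E) = 0 := by
      apply le_antisymm ?_ zero_le
      rw [← hnull]
      exact measure_mono (diff_subset_diff_left (preimage_mono hSE))
    rw [h3, add_zero] at h2
    rw [inter_comm]
    rw [h2, h1]
  have claim2 : ∀ k, μ (Gset T A k) =
      μ (A ∩ (E ∩ T.f ⁻¹' (Gset T A k))) + μ (Gset T A (k+1)) := by
    intro k
    have h1 : μ (Gset T A k) = μ (E ∩ T.f ⁻¹' (Gset T A k)) :=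
      (claim1 _ (Gset_meas T hA k) (Gset_subset T A k)).symm
    have h2 := measure_inter_add_diff (μ := μ) (E ∩ T.f ⁻¹' (Gset T A k)) hA
    have h3 : (E ∩ T.f ⁻¹' (Gset T A k)) \ A = Gset T A (k+1) := by
      ext z
      constructor
      · rintro ⟨⟨h1z, h2z⟩, h3z⟩; exact ⟨⟨h1z, h3z⟩, h2z⟩
      · rintro ⟨⟨h1z, h3z⟩, h2z⟩; exact ⟨⟨h1z, h2z⟩, h3z⟩
    rw [h3] at h2
    rw [h1, ← h2, inter_comm A _]
  have htele : ∀ K : ℕ, (∑ k ∈ Finset.range K, μ (A ∩ (E ∩ T.f ⁻¹' (Gset T A k)))) +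
      μ (Gset T A K) = μ (Gset T A 0) := by
    intro K
    induction K with
    | zero => simp
    | succ K ihK =>
      rw [Finset.sum_range_succ, add_assoc, ← claim2 K]
      exact ihK
  have hBsub : ∀ k : ℕ, B (k+1) ⊆ A ∩ (E ∩ T.f ⁻¹' (Gset T A k)) := by
    intro k x hx
    have hxA : x ∈ A := hB _ hx
    have hxE : x ∈ E := hAE hxA
    refine ⟨hxA, hxE, ?_⟩
    refine Gset_mem T A k (T.f x) (fun i hi => ?_) ?_
    · rw [← Function.iterate_succ_apply]
      refine ⟨orbit_mem T hxE (i+1), ?_⟩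
      exact hBav (k+1) x hx (i+1) (by omega) (by omega)
    · rw [← Function.iterate_succ_apply]
      exact orbit_mem T hxE (k+1)
  have hsum : ∀ K : ℕ, (∑ k ∈ Finset.range K, μ (B (k+1))) ≤ 1 := by
    intro K
    calc (∑ k ∈ Finset.range K, μ (B (k+1)))
        ≤ ∑ k ∈ Finset.range K, μ (A ∩ (E ∩ T.f ⁻¹' (Gset T A k))) :=
          Finset.sum_le_sum (fun k _ => measure_mono (hBsub k))
      _ ≤ μ (Gset T A 0) := by rw [← htele K]; exact le_add_right le_rfl
      _ ≤ 1 := prob_le_one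
  rw [ENNReal.tsum_eq_iSup_sum]
  apply iSup_le
  intro s
  rcases s.eq_empty_or_nonempty with rfl | hs
  · simp
  calc ∑ k ∈ s, μ (B (k+1)) ≤ ∑ k ∈ Finset.range (s.max' hs + 1), μ (B (k+1)) := by
        apply Finset.sum_le_sum_of_subset
        intro k hk
        exact Finset.mem_range.2 (by have := Finset.le_max' s k hk; omega)
    _ ≤ 1 := hsum _

end AdaptedProof

set_option maxHeartbeats 1000000 in
open AdaptedProof in
theorem every_invariant_measure_adapted_of_nonperiodic_holder
    (T : PCMarkovMap)
    (j : ℕ) (hj : j < T.m) (p : ℝ) (hp : p = T.pt j)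
    (hsing : T.SingularAt p) (hnosing : T.NoSingularitiesOff p)
    (hnonper : ∀ n : ℕ, 1 ≤ n → ¬ PerSingAux T.f p n)
    (CH α : ℝ) (hCH : 1 ≤ CH) (hα : 1 < α)
    (hHolder : ∀ x ∈ Icc p (T.pt (j + 1)), ∀ y ∈ Icc p (T.pt (j + 1)),
      |T.br j x - T.br j y| ≤ CH * |x - y| ^ (1 / α))
    (μ : Measure ℝ) [IsProbabilityMeasure μ] (hinv : T.Invariant μ) :
    (∫⁻ y in Ioc p 1, ENNReal.ofReal |Real.log (y - p)| ∂μ) < ⊤ := by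
  classical
  have hrange : (Finset.range T.m).Nonempty := ⟨0, Finset.mem_range.2 (by have := T.hm; omega)⟩
  set g : ℝ := (Finset.range T.m).inf' hrange (fun i => T.pt (i+1) - T.pt i) with hgdef
  have hgpos : 0 < g := by
    rw [hgdef, Finset.lt_inf'_iff]
    intro i hi
    exact sub_pos.2 (T.pt_lt i (Finset.mem_range.1 hi))
  have hg : ∀ i, i < T.m → g + T.pt i ≤ T.pt (i+1) := by
    intro i hi
    have h1 : g ≤ T.pt (i+1) - T.pt i := by
      rw [hgdef]
      exact Finset.inf'_le _ (Finset.mem_range.2 hi)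
    linarith
  obtain ⟨M₀, hM₀⟩ := hnosing (g/4) (by positivity)
  set M : ℝ := max M₀ 2 with hMdef
  have hM2 : 2 ≤ M := le_max_right _ _
  have hM0 : (0:ℝ) < M := by linarith
  have hM1 : (1:ℝ) < M := by linarith
  have hM : ∀ y ∈ (Icc (0:ℝ) 1 \ Ioo p (p + g/4)) \ T.ptSet, |deriv T.f y| ≤ M :=
    fun y hy => le_trans (hM₀ y hy) (le_max_left _ _)
  have hCH0 : (0:ℝ) < CH := by linarith
  have hplt : p < T.pt (j+1) := by rw [hp]; exact T.pt_lt j hj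
  set pQ : ℝ := T.pt (j+1) - p with hpQdef
  have hpQ : 0 < pQ := sub_pos.2 hplt
  have hp0 : (0:ℝ) ≤ p := by
    rw [hp]
    calc (0:ℝ) = T.pt 0 := T.pt0.symm
      _ ≤ T.pt j := pt_mono T (Nat.zero_le _) (le_of_lt hj)
  have hptj1 : T.pt (j+1) ≤ 1 := calc
    T.pt (j+1) ≤ T.pt T.m := pt_mono T hj le_rfl
    _ = 1 := T.ptm
  have hpg : p + g ≤ 1 := by
    have h1 := hg j hj
    rw [← hp] at h1
    linarith
  set A : Set ℝ := Ioo p (p + g/4) with hAdef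
  have hAE : A ⊆ Icc (0:ℝ) 1 := by
    intro z hz
    refine ⟨le_trans hp0 (le_of_lt hz.1), ?_⟩
    have := hz.2
    linarith
  set θ : ℝ := M ^ (-α) with hθdef
  have hθpos : 0 < θ := Real.rpow_pos_of_pos hM0 _
  have hθlt1 : θ < 1 := Real.rpow_lt_one_of_one_lt_of_neg hM1 (by linarith)
  set b : ℝ := min (min pQ (g/4)) ((g/(4*CH))^α) with hbdef
  have hbpos : 0 < b := lt_min (lt_min hpQ (by positivity))
    (Real.rpow_pos_of_pos (by positivity) _)
  have hbg4 : b ≤ g/4 := le_trans (min_le_left _ _) (min_le_right _ _)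
  have hbpQ : b ≤ pQ := le_trans (min_le_left _ _) (min_le_left _ _)
  have hθk1 : ∀ k : ℕ, θ^k ≤ 1 := fun k => pow_le_one₀ (le_of_lt hθpos) (le_of_lt hθlt1)
  have hθkpos : ∀ k : ℕ, 0 < θ^k := fun k => pow_pos hθpos k
  have hkey : ∀ k : ℕ, b * θ^k ≤ eps pQ g CH M α k := by
    intro k
    have hMk : (0:ℝ) < M^k := pow_pos hM0 k
    have e1 : (θ:ℝ)^k = (M^k : ℝ)^(-α) := by
      rw [hθdef, ← Real.rpow_natCast (M ^ (-α)) k, ← Real.rpow_natCast M k,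
        ← Real.rpow_mul (le_of_lt hM0), ← Real.rpow_mul (le_of_lt hM0)]
      ring_nf
    have e2 : (g/(4*CH*M^k))^α = (g/(4*CH))^α * θ^k := by
      have h0 : g/(4*CH*M^k) = (g/(4*CH)) * (M^k)⁻¹ := by
        field_simp
      rw [h0, Real.mul_rpow (by positivity) (by positivity),
        Real.inv_rpow (le_of_lt hMk), ← Real.rpow_neg (le_of_lt hMk), ← e1]
    show b * θ^k ≤ min pQ ((g/(4*CH*M^k))^α)
    apply le_min
    · calc b * θ^k ≤ b * 1 := mul_le_mul_of_nonneg_left (hθk1 k) (le_of_lt hbpos)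
        _ = b := mul_one b
        _ ≤ pQ := hbpQ
    · rw [e2]
      exact mul_le_mul_of_nonneg_right (min_le_right _ _) (le_of_lt (hθkpos k))
  set B : ℕ → Set ℝ := fun k => Ioo p (p + b*θ^k) with hBdef
  have hB : ∀ k, B k ⊆ A := by
    intro k z hz
    refine ⟨hz.1, ?_⟩
    have h1 : b*θ^k ≤ b := mul_le_of_le_one_right (le_of_lt hbpos) (hθk1 k)
    have := hz.2
    linarith
  have hBav : ∀ k : ℕ, ∀ x ∈ B k, ∀ l, 1 ≤ l → l ≤ k → T.f^[l] x ∉ A := by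
    intro k x hx l hl1 hlk
    rcases l with _ | l₀
    · omega
    have hxe : x ∈ Ioo p (p + eps pQ g CH M α (l₀+1)) := by
      refine ⟨hx.1, ?_⟩
      have h1 : b*θ^k ≤ eps pQ g CH M α k := hkey k
      have h2 : eps pQ g CH M α k ≤ eps pQ g CH M α (l₀+1) :=
        eps_mono hgpos hCH hM2 hα hlk
      have := hx.2
      linarith
    exact avoid T hj hp hCH hα hHolder hnonper hgpos hg hM2 hM l₀ x hxe
  have hkac : ∑' k : ℕ, μ (B (k+1)) ≤ 1 :=
    kac T μ hinv (A := A) measurableSet_Ioo hAE B hB hBav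
  set L : ℝ := α * Real.log M with hLdef
  have hlogM : 0 < Real.log M := Real.log_pos hM1
  have hLpos : 0 < L := mul_pos (by linarith) hlogM
  have hlogθ : Real.log θ = -L := by
    rw [hθdef, Real.log_rpow hM0, hLdef]; ring
  set C : ℝ := |Real.log b| + L with hCdef
  have hC0 : 0 ≤ C := by
    rw [hCdef]
    have := abs_nonneg (Real.log b)
    linarith
  set N : ℝ → ℝ≥0∞ := fun y => ∑' k : ℕ, (B (k+1)).indicator (fun _ => (1:ℝ≥0∞)) y
    with hNdef
  have hNmeas : Measurable N :=
    Measurable.ennreal_tsum (fun k => measurable_const.indicator measurableSet_Ioo)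
  have hpoint : ∀ y ∈ Ioc p 1, ENNReal.ofReal |Real.log (y - p)| ≤
      ENNReal.ofReal C + ENNReal.ofReal L * N y := by
    intro y hy
    set t : ℝ := y - p with htdef
    have ht0 : 0 < t := sub_pos.2 hy.1
    have ht1 : t ≤ 1 := by
      have h1 := hy.2
      rw [htdef]
      linarith
    have hSne : {k : ℕ | b * θ^(k+1) ≤ t}.Nonempty := by
      have htd : (0:ℝ) < t/b := by positivity
      obtain ⟨k, hk⟩ := ((tendsto_pow_atTop_nhds_zero_of_lt_one (le_of_lt hθpos)
        hθlt1).eventually_lt_const htd).exists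
      refine ⟨k, ?_⟩
      have h2 : θ^(k+1) ≤ θ^k :=
        pow_le_pow_of_le_one (le_of_lt hθpos) (le_of_lt hθlt1) (Nat.le_succ k)
      have h3 : θ^k * b < t := by
        have h4 := mul_lt_mul_of_pos_right hk hbpos
        rwa [div_mul_cancel₀ t (ne_of_gt hbpos)] at h4
      rw [mul_comm] at h3
      have h5 : b*θ^(k+1) ≤ b*θ^k := mul_le_mul_of_nonneg_left h2 (le_of_lt hbpos)
      show b * θ^(k+1) ≤ t
      linarith
    set K : ℕ := sInf {k : ℕ | b * θ^(k+1) ≤ t} with hKdef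
    have hKmem : b * θ^(K+1) ≤ t := Nat.sInf_mem hSne
    have hKmin : ∀ k, k < K → t < b * θ^(k+1) := by
      intro k hk
      by_contra hcon
      push_neg at hcon
      exact Nat.notMem_of_lt_sInf hk hcon
    have hlogb : Real.log (b * θ^(K+1)) = Real.log b + ((K:ℝ)+1) * Real.log θ := by
      rw [Real.log_mul (ne_of_gt hbpos) (ne_of_gt (hθkpos (K+1))), Real.log_pow]
      push_cast
      ring
    have hlogt : Real.log (b*θ^(K+1)) ≤ Real.log t := Real.log_le_log (by positivity) hKmem
    have hlt0 : Real.log t ≤ 0 := Real.log_nonpos (le_of_lt ht0) ht1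
    have habs : |Real.log t| ≤ C + L * (K:ℝ) := by
      rw [abs_of_nonpos hlt0]
      rw [hlogθ] at hlogb
      have h6 : -Real.log t ≤ -Real.log b + ((K:ℝ)+1) * L := by
        rw [hlogb] at hlogt
        nlinarith [hlogt]
      have h7 : -Real.log b ≤ |Real.log b| := neg_le_abs _
      calc -Real.log t ≤ -Real.log b + ((K:ℝ)+1)*L := h6
        _ ≤ |Real.log b| + L + (K:ℝ)*L := by nlinarith
        _ = C + L*(K:ℝ) := by rw [hCdef]; ring
    have hcount : (K : ℝ≥0∞) ≤ N y := by
      have h1 : ∀ k ∈ Finset.range K, (B (k+1)).indicator (fun _ => (1:ℝ≥0∞)) y = 1 := by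
        intro k hk
        apply Set.indicator_of_mem
        refine ⟨hy.1, ?_⟩
        have h2 := hKmin k (Finset.mem_range.1 hk)
        rw [htdef] at h2
        show y < p + b*θ^(k+1)
        linarith
      calc (K : ℝ≥0∞) = ∑ k ∈ Finset.range K, (B (k+1)).indicator (fun _ => (1:ℝ≥0∞)) y := by
            rw [Finset.sum_congr rfl h1]
            simp
        _ ≤ N y := by simp only [hNdef]; exact ENNReal.sum_le_tsum _
    calc ENNReal.ofReal |Real.log t| ≤ ENNReal.ofReal (C + L*(K:ℝ)) :=
          ENNReal.ofReal_le_ofReal habs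
      _ = ENNReal.ofReal C + ENNReal.ofReal L * (K:ℝ≥0∞) := by
          rw [ENNReal.ofReal_add hC0 (mul_nonneg (le_of_lt hLpos) (Nat.cast_nonneg K)), ENNReal.ofReal_mul (le_of_lt hLpos),
            ENNReal.ofReal_natCast]
      _ ≤ ENNReal.ofReal C + ENNReal.ofReal L * N y :=
          add_le_add le_rfl (mul_le_mul_right hcount _)
  have hmain : (∫⁻ y in Ioc p 1, ENNReal.ofReal |Real.log (y - p)| ∂μ) ≤
      ENNReal.ofReal C + ENNReal.ofReal L := by
    calc (∫⁻ y in Ioc p 1, ENNReal.ofReal |Real.log (y - p)| ∂μ)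
        ≤ ∫⁻ y in Ioc p 1, (ENNReal.ofReal C + ENNReal.ofReal L * N y) ∂μ :=
          setLIntegral_mono (measurable_const.add (measurable_const.mul hNmeas)) hpoint
      _ = ENNReal.ofReal C * μ (Ioc p 1) + ENNReal.ofReal L * ∫⁻ y in Ioc p 1, N y ∂μ := by
          rw [lintegral_add_left measurable_const, lintegral_const_mul _ hNmeas,
            lintegral_const, Measure.restrict_apply_univ]
      _ ≤ ENNReal.ofReal C * 1 + ENNReal.ofReal L * 1 := by
          gcongr
          · exact prob_le_one
          · calc ∫⁻ y in Ioc p 1, N y ∂μ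
                = ∑' k : ℕ, ∫⁻ y in Ioc p 1, (B (k+1)).indicator (fun _ => (1:ℝ≥0∞)) y ∂μ := by
                  simp only [hNdef]
                  exact lintegral_tsum
                    (fun k => (measurable_const.indicator measurableSet_Ioo).aemeasurable)
              _ ≤ ∑' k : ℕ, μ (B (k+1)) := by
                  apply ENNReal.tsum_le_tsum
                  intro k
                  calc ∫⁻ y in Ioc p 1, (B (k+1)).indicator (fun _ => (1:ℝ≥0∞)) y ∂μ
                      ≤ ∫⁻ y, (B (k+1)).indicator (fun _ => (1:ℝ≥0∞)) y ∂μ :=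
                        setLIntegral_le_lintegral _ _
                    _ = μ (B (k+1)) := lintegral_indicator_one measurableSet_Ioo
              _ ≤ 1 := hkac
      _ = ENNReal.ofReal C + ENNReal.ofReal L := by rw [mul_one, mul_one]
  exact lt_of_le_of_lt hmain
    (ENNReal.add_lt_top.2 ⟨ENNReal.ofReal_lt_top, ENNReal.ofReal_lt_top⟩)
end

section
/- Let f : [0,1] → [0,1] be a piecewise C¹ uniformly expanding Markov map with partition points B = {x_0, …, x_m}, let B̃ = ⋃_{n≥0} f^{−n}(B), I' = [0,1] \ B̃, and let c : I' → {0,…,m−1}^ℕ be the coding map c(x)_n = the unique i with f^n(x) ∈ int I_i. Define the 0–1 transition matrix A by A_{ij} = 1 if and only if f(int I_i) ∩ int I_j ≠ ∅, and let Σ_A⁺ = {ω ∈ {0,…,m−1}^ℕ : A_{ω_k ω_{k+1}} = 1 for all k ≥ 0}. Then the closure of c(I') in {0,…,m−1}^ℕ (product topology) equals Σ_A⁺. -/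
open Set Filter MeasureTheory Topology
open scoped ENNReal

namespace PCMarkovMap
variable (T : PCMarkovMap)

/-- `B̃ = ⋃_{n ≥ 0} f^{-n}(B)`: all preimages of partition points. -/
def Btilde : Set ℝ := ⋃ n : ℕ, (T.f^[n]) ⁻¹' T.ptSet

/-- `I' = [0,1] \ B̃`: points whose orbit never meets a partition point. -/
def goodSet : Set ℝ := Icc (0:ℝ) 1 \ T.Btilde

/-- The coding map `c : I' → {0,…,m−1}^ℕ`, `c(x)_n = i` iff `fⁿ(x) ∈ int I_i`
(junk value `0` off `I'`). -/
noncomputable def code (x : ℝ) (n : ℕ) : ℕ :=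
  if h : ∃ i, i < T.m ∧ T.f^[n] x ∈ Ioo (T.pt i) (T.pt (i + 1)) then h.choose else 0

/-- The transition relation: `A_{ij} = 1` iff `f(int I_i) ∩ int I_j ≠ ∅`. -/
def adm (i k : ℕ) : Prop :=
  (T.f '' Ioo (T.pt i) (T.pt (i + 1)) ∩ Ioo (T.pt k) (T.pt (k + 1))).Nonempty

/-- The subshift of finite type `Σ_A⁺ ⊆ {0,…,m−1}^ℕ` of `A`-admissible sequences. -/
def SigmaA : Set (ℕ → ℕ) :=
  {ω | (∀ n, ω n < T.m) ∧ ∀ n, T.adm (ω n) (ω (n + 1))}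

end PCMarkovMap

namespace PCMarkovMap
variable (T : PCMarkovMap)

lemma pt_mono : ∀ {i j : ℕ}, i ≤ j → j ≤ T.m → T.pt i ≤ T.pt j := by
  intro i j hij hjm
  induction j with
  | zero => simp_all
  | succ n ih =>
    rcases Nat.eq_or_lt_of_le hij with h | h
    · simp [h]
    · exact le_trans (ih (Nat.lt_succ_iff.1 h) (le_trans (Nat.le_succ n) hjm))
        (le_of_lt (T.pt_lt n (Nat.lt_of_succ_le hjm)))

lemma Ioo_subset_Icc01 {i : ℕ} (hi : i < T.m) :
    Ioo (T.pt i) (T.pt (i + 1)) ⊆ Icc (0:ℝ) 1 := by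
  intro y hy
  constructor
  · calc (0:ℝ) = T.pt 0 := T.pt0.symm
    _ ≤ T.pt i := T.pt_mono (Nat.zero_le i) (le_of_lt hi)
    _ ≤ y := le_of_lt hy.1
  · calc y ≤ T.pt (i+1) := le_of_lt hy.2
    _ ≤ T.pt T.m := T.pt_mono hi (le_refl _)
    _ = 1 := T.ptm

/-- uniqueness of the interval -/
lemma interval_unique {i j : ℕ} (hi : i < T.m) (hj : j < T.m) {y : ℝ}
    (h1 : y ∈ Ioo (T.pt i) (T.pt (i + 1))) (h2 : y ∈ Icc (T.pt j) (T.pt (j + 1))) : i = j := by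
  by_contra hne
  rcases Nat.lt_or_ge i j with h | h
  · have : T.pt (i+1) ≤ T.pt j := T.pt_mono h (le_of_lt hj)
    linarith [h1.2, h2.1]
  · have hji : j < i := lt_of_le_of_ne h (Ne.symm hne)
    have : T.pt (j+1) ≤ T.pt i := T.pt_mono hji (le_of_lt hi)
    linarith [h1.1, h2.2]

/-- every non-partition point of `[0,1]` is in the interior of some interval -/
lemma exists_interval {y : ℝ} (hy : y ∈ Icc (0:ℝ) 1) (hy' : y ∉ T.ptSet) :
    ∃ i, i < T.m ∧ y ∈ Ioo (T.pt i) (T.pt (i + 1)) := by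
  classical
  have hne : ∀ i, i ≤ T.m → y ≠ T.pt i := by
    intro i hi h; exact hy' ⟨i, hi, h⟩
  have h0 : T.pt 0 < y := by
    rw [T.pt0]
    exact lt_of_le_of_ne hy.1 (Ne.symm (by simpa [T.pt0] using hne 0 (Nat.zero_le _)))
  set P : ℕ → Prop := fun i => T.pt i < y with hP
  set k := Nat.findGreatest P T.m with hk
  have hPk : P k := Nat.findGreatest_spec (Nat.zero_le _) h0
  have hkm : k ≤ T.m := Nat.findGreatest_le _
  have hklt : k < T.m := by
    rcases Nat.eq_or_lt_of_le hkm with h | h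
    · exfalso
      have : T.pt T.m < y := by rw [← h]; exact hPk
      rw [T.ptm] at this; linarith [hy.2]
    · exact h
  refine ⟨k, hklt, hPk, ?_⟩
  have hnP : ¬ P (k + 1) := Nat.findGreatest_is_greatest (Nat.lt_succ_self k) hklt
  have : y ≤ T.pt (k+1) := le_of_not_gt hnP
  exact lt_of_le_of_ne this (hne (k+1) hklt)

lemma iterate_mem_Icc {x : ℝ} (hx : x ∈ Icc (0:ℝ) 1) (n : ℕ) : T.f^[n] x ∈ Icc (0:ℝ) 1 := by
  induction n with
  | zero => simpa using hx
  | succ n ih =>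
    rw [Function.iterate_succ_apply']
    exact T.f_maps _ ih

lemma ptSet_countable : T.ptSet.Countable := by
  have : T.ptSet ⊆ T.pt '' {i | i ≤ T.m} := by
    rintro y ⟨i, hi, rfl⟩; exact ⟨i, hi, rfl⟩
  exact Countable.mono this ((Set.to_countable _).image _)

lemma f_injOn {i : ℕ} (hi : i < T.m) : InjOn T.f (Ioo (T.pt i) (T.pt (i + 1))) := by
  have heq : EqOn T.f (T.br i) (Ioo (T.pt i) (T.pt (i + 1))) := fun y hy =>
    (T.br_eq_f i hi y hy).symm
  have hsub : Ioo (T.pt i) (T.pt (i + 1)) ⊆ Icc (T.pt i) (T.pt (i + 1)) := Ioo_subset_Icc_self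
  rcases T.br_mono i hi with h | h
  · exact (InjOn.mono hsub h.injOn).congr heq.symm
  · exact (InjOn.mono hsub h.injOn).congr heq.symm

lemma preimage_countable {C : Set ℝ} (hC : C.Countable) :
    {x ∈ Icc (0:ℝ) 1 | T.f x ∈ C}.Countable := by
  have hsub : {x ∈ Icc (0:ℝ) 1 | T.f x ∈ C} ⊆
      T.ptSet ∪ ⋃ i ∈ Finset.range T.m, (Ioo (T.pt i) (T.pt (i + 1)) ∩ T.f ⁻¹' C) := by
    rintro x ⟨hx1, hx2⟩
    by_cases hp : x ∈ T.ptSet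
    · exact Or.inl hp
    · obtain ⟨i, hi, hxi⟩ := T.exists_interval hx1 hp
      exact Or.inr (mem_biUnion (Finset.mem_range.2 hi) ⟨hxi, hx2⟩)
  refine Countable.mono hsub (Countable.union T.ptSet_countable ?_)
  refine Countable.biUnion (Finset.countable_toSet _) ?_
  intro i hi
  have hi' : i < T.m := Finset.mem_range.1 hi
  refine MapsTo.countable_of_injOn (t := C) (fun x hx => hx.2) ?_ hC
  exact (T.f_injOn hi').mono inter_subset_left

lemma btilde_countable : (T.Btilde ∩ Icc (0:ℝ) 1).Countable := by
  have key : ∀ n : ℕ, {x ∈ Icc (0:ℝ) 1 | T.f^[n] x ∈ T.ptSet}.Countable := by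
    intro n
    induction n with
    | zero =>
      refine Countable.mono ?_ T.ptSet_countable
      rintro x ⟨_, hx⟩; simpa using hx
    | succ n ih =>
      have hsub : {x ∈ Icc (0:ℝ) 1 | T.f^[n+1] x ∈ T.ptSet} ⊆
          {x ∈ Icc (0:ℝ) 1 | T.f x ∈ {y ∈ Icc (0:ℝ) 1 | T.f^[n] y ∈ T.ptSet}} := by
        rintro x ⟨hx1, hx2⟩
        refine ⟨hx1, T.f_maps x hx1, ?_⟩
        rwa [Function.iterate_succ_apply] at hx2
      exact Countable.mono hsub (T.preimage_countable ih)
  have : T.Btilde ∩ Icc (0:ℝ) 1 ⊆ ⋃ n : ℕ, {x ∈ Icc (0:ℝ) 1 | T.f^[n] x ∈ T.ptSet} := by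
    rintro x ⟨hx1, hx2⟩
    obtain ⟨n, hn⟩ := mem_iUnion.1 hx1
    exact mem_iUnion.2 ⟨n, hx2, hn⟩
  exact Countable.mono this (countable_iUnion key)

end PCMarkovMap
namespace PCMarkovMap
variable (T : PCMarkovMap)

/-- Markov property: if `f(int I_i)` meets `int I_k` then it contains it. -/
lemma adm_sub {i k : ℕ} (hi : i < T.m) (hk : k < T.m) (h : T.adm i k) :
    Ioo (T.pt k) (T.pt (k + 1)) ⊆ T.f '' Ioo (T.pt i) (T.pt (i + 1)) := by
  obtain ⟨S, hS, hSeq⟩ := T.markov i hi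
  have himg : T.f '' Ioo (T.pt i) (T.pt (i + 1)) = T.br i '' Ioo (T.pt i) (T.pt (i + 1)) :=
    image_congr (fun y hy => (T.br_eq_f i hi y hy).symm)
  -- k ∈ S
  obtain ⟨y, hy1, hy2⟩ := h
  rw [himg] at hy1
  have hy1' : y ∈ T.br i '' Icc (T.pt i) (T.pt (i + 1)) :=
    image_mono Ioo_subset_Icc_self hy1
  rw [hSeq] at hy1'
  obtain ⟨j, hjS, hyj⟩ := mem_iUnion₂.1 hy1'
  have hkj : k = j := T.interval_unique hk (hS j hjS) hy2 hyj
  subst hkj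
  -- now Icc_k ⊆ br i '' Icc
  have hIcck : Icc (T.pt k) (T.pt (k + 1)) ⊆ T.br i '' Icc (T.pt i) (T.pt (i + 1)) := by
    rw [hSeq]; intro z hz; exact mem_iUnion₂.2 ⟨k, hjS, hz⟩
  -- endpoints of I_k are in the image
  obtain ⟨u, hu, huk⟩ := hIcck (left_mem_Icc.2 (le_of_lt (T.pt_lt k hk)))
  obtain ⟨v, hv, hvk⟩ := hIcck (right_mem_Icc.2 (le_of_lt (T.pt_lt k hk)))
  intro z hz
  obtain ⟨w, hw, hwz⟩ := hIcck (Ioo_subset_Icc_self hz)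
  rw [himg]
  refine ⟨w, ?_, hwz⟩
  have haw : T.pt i ≤ w := hw.1
  have hwb : w ≤ T.pt (i + 1) := hw.2
  have ha : T.pt i ∈ Icc (T.pt i) (T.pt (i + 1)) :=
    left_mem_Icc.2 (le_of_lt (T.pt_lt i hi))
  have hb : T.pt (i + 1) ∈ Icc (T.pt i) (T.pt (i + 1)) :=
    right_mem_Icc.2 (le_of_lt (T.pt_lt i hi))
  constructor
  · rcases eq_or_lt_of_le haw with heq | hlt
    · exfalso
      rcases T.br_mono i hi with hm | hm
      · -- br (pt i) is the min; z = br w = br (pt i) ≤ br u = pt k < z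
        have : T.br i w ≤ T.br i u := by
          rw [← heq]; exact hm.monotoneOn ha hu hu.1
        rw [hwz, huk] at this
        linarith [hz.1]
      · -- br (pt i) is the max; z = br w ≥ br v = pt (k+1) > z
        have : T.br i v ≤ T.br i w := by
          rw [← heq]; exact hm.antitoneOn ha hv hv.1
        rw [hwz, hvk] at this
        linarith [hz.2]
    · exact hlt
  · rcases eq_or_lt_of_le hwb with heq | hlt
    · exfalso
      rcases T.br_mono i hi with hm | hm
      · have : T.br i v ≤ T.br i w := by
          rw [heq]; exact hm.monotoneOn hv hb hv.2
        rw [hwz, hvk] at this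
        linarith [hz.2]
      · have : T.br i w ≤ T.br i u := by
          rw [heq]; exact hm.antitoneOn hu hb hu.2
        rw [hwz, huk] at this
        linarith [hz.1]
    · exact hlt

/-- cylinder surjectivity -/
lemma cyl_surj (ω : ℕ → ℕ) (hω : ω ∈ T.SigmaA) :
    ∀ n : ℕ, Ioo (T.pt (ω n)) (T.pt (ω n + 1)) ⊆ T.f^[n] '' T.cyl (n + 1) ω := by
  obtain ⟨hωm, hωa⟩ := hω
  intro n
  induction n with
  | zero =>
    intro y hy
    refine ⟨y, ?_, rfl⟩
    simp [cyl]
    exact hy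
  | succ n ih =>
    intro y hy
    obtain ⟨z, hz, hzy⟩ := T.adm_sub (hωm n) (hωm (n+1)) (hωa n) hy
    obtain ⟨x, hx, hxz⟩ := ih hz
    refine ⟨x, ?_, ?_⟩
    · simp only [cyl, mem_iInter] at hx ⊢
      intro k hk
      rcases Nat.lt_or_ge k (n+1) with h | h
      · exact hx k (Finset.mem_range.2 (Finset.mem_range.1 hk |> fun _ => h))
      · have hk' : k = n + 1 := by
          have := Finset.mem_range.1 hk; omega
        subst hk'
        show T.f^[n+1] x ∈ Ioo (T.pt (ω (n+1))) (T.pt (ω (n+1) + 1))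
        rw [Function.iterate_succ_apply', hxz, hzy]
        exact hy
    · rw [Function.iterate_succ_apply', hxz, hzy]

end PCMarkovMap
namespace PCMarkovMap
variable (T : PCMarkovMap)

lemma code_spec {x : ℝ} {n : ℕ} (h : ∃ i, i < T.m ∧ T.f^[n] x ∈ Ioo (T.pt i) (T.pt (i + 1))) :
    T.code x n < T.m ∧ T.f^[n] x ∈ Ioo (T.pt (T.code x n)) (T.pt (T.code x n + 1)) := by
  rw [code, dif_pos h]
  exact h.choose_spec

lemma code_eq {x : ℝ} {n i : ℕ} (hi : i < T.m)
    (h : T.f^[n] x ∈ Ioo (T.pt i) (T.pt (i + 1))) : T.code x n = i := by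
  have hex : ∃ i, i < T.m ∧ T.f^[n] x ∈ Ioo (T.pt i) (T.pt (i + 1)) := ⟨i, hi, h⟩
  obtain ⟨h1, h2⟩ := T.code_spec hex
  exact T.interval_unique h1 hi h2 (Ioo_subset_Icc_self h)

lemma code_mem_SigmaA {x : ℝ} (hx : x ∈ T.goodSet) : T.code x ∈ T.SigmaA := by
  obtain ⟨hx1, hx2⟩ := hx
  have hiter : ∀ n : ℕ, ∃ i, i < T.m ∧ T.f^[n] x ∈ Ioo (T.pt i) (T.pt (i + 1)) := by
    intro n
    have h1 : T.f^[n] x ∈ Icc (0:ℝ) 1 := T.iterate_mem_Icc hx1 n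
    have h2 : T.f^[n] x ∉ T.ptSet := by
      intro hc
      exact hx2 (mem_iUnion.2 ⟨n, hc⟩)
    exact T.exists_interval h1 h2
  constructor
  · intro n; exact (T.code_spec (hiter n)).1
  · intro n
    obtain ⟨h1, h2⟩ := T.code_spec (hiter n)
    obtain ⟨h3, h4⟩ := T.code_spec (hiter (n+1))
    refine ⟨T.f^[n+1] x, ⟨T.f^[n] x, h2, ?_⟩, h4⟩
    rw [Function.iterate_succ_apply']

lemma SigmaA_closed : IsClosed T.SigmaA := by
  have : T.SigmaA = (⋂ n : ℕ, {ω : ℕ → ℕ | ω n < T.m}) ∩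
      ⋂ n : ℕ, {ω : ℕ → ℕ | T.adm (ω n) (ω (n + 1))} := by
    ext ω
    simp only [SigmaA, mem_setOf_eq, mem_inter_iff, mem_iInter, mem_setOf_eq]
  rw [this]
  refine IsClosed.inter (isClosed_iInter fun n => ?_) (isClosed_iInter fun n => ?_)
  · have h1 : {ω : ℕ → ℕ | ω n < T.m} = (fun ω : ℕ → ℕ => ω n) ⁻¹' {i : ℕ | i < T.m} := rfl
    rw [h1]
    exact IsClosed.preimage (continuous_apply n) (isClosed_discrete _)
  · have h2 : {ω : ℕ → ℕ | T.adm (ω n) (ω (n + 1))} =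
        (fun ω : ℕ → ℕ => (ω n, ω (n + 1))) ⁻¹' {p : ℕ × ℕ | T.adm p.1 p.2} := rfl
    rw [h2]
    exact IsClosed.preimage (Continuous.prodMk (continuous_apply n) (continuous_apply (n+1)))
      (isClosed_discrete _)

end PCMarkovMap

/-- The closure (in the product topology) of the image of the coding map
`c : I' → {0,…,m−1}^ℕ` of a piecewise `C¹` uniformly expanding Markov map equals the subshift
of finite type `Σ_A⁺` determined by the transition matrix `A`. -/
theorem closure_coding_image_eq_SFT (T : PCMarkovMap) :
    closure (T.code '' T.goodSet) = T.SigmaA := by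
  apply Subset.antisymm
  · apply closure_minimal _ T.SigmaA_closed
    rintro ω ⟨x, hx, rfl⟩
    exact T.code_mem_SigmaA hx
  · intro ω hω
    -- for each n, find x ∈ goodSet ∩ cyl (n+1)
    have key : ∀ n : ℕ, ∃ x, x ∈ T.goodSet ∧ x ∈ T.cyl (n + 1) ω := by
      intro n
      have hsurj := T.cyl_surj ω hω n
      -- cyl (n+1) is uncountable
      have hcyl_unc : ¬ (T.cyl (n + 1) ω).Countable := by
        intro hc
        have himg : (T.f^[n] '' T.cyl (n + 1) ω).Countable := hc.image _
        have hIoo : (Ioo (T.pt (ω n)) (T.pt (ω n + 1))).Countable :=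
          Countable.mono hsurj himg
        have hlt : T.pt (ω n) < T.pt (ω n + 1) := T.pt_lt _ (hω.1 n)
        have := hIoo.le_aleph0
        rw [Cardinal.mk_Ioo_real hlt] at this
        exact absurd this (not_le.2 Cardinal.aleph0_lt_continuum)
      -- cyl (n+1) ⊆ Icc 0 1
      have hcyl_sub : T.cyl (n + 1) ω ⊆ Icc (0:ℝ) 1 := by
        intro x hx
        simp only [PCMarkovMap.cyl, mem_iInter] at hx
        have h0 := hx 0 (Finset.mem_range.2 (Nat.succ_pos n))
        simp only [Function.iterate_zero_apply, mem_preimage] at h0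
        exact T.Ioo_subset_Icc01 (hω.1 0) h0
      by_contra hc
      push_neg at hc
      have : T.cyl (n + 1) ω ⊆ T.Btilde ∩ Icc (0:ℝ) 1 := by
        intro x hx
        refine ⟨?_, hcyl_sub hx⟩
        by_contra hb
        exact hc x ⟨hcyl_sub hx, hb⟩ hx
      exact hcyl_unc (Countable.mono this T.btilde_countable)
    choose x hx1 hx2 using key
    have hcode : ∀ n k, k ≤ n → T.code (x n) k = ω k := by
      intro n k hk
      have := hx2 n
      simp only [PCMarkovMap.cyl, mem_iInter] at this
      have h := this k (Finset.mem_range.2 (Nat.lt_succ_of_le hk))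
      exact T.code_eq (hω.1 k) h
    refine mem_closure_of_tendsto (f := fun n => T.code (x n)) (b := atTop) ?_ ?_
    · rw [tendsto_pi_nhds]
      intro k
      apply Tendsto.congr' (f₁ := fun _ => ω k)
      · filter_upwards [eventually_ge_atTop k] with n hn
        exact (hcode n k hn).symm
      · exact tendsto_const_nhds
    · filter_upwards with n
      exact ⟨x n, hx1 n, rfl⟩
end

section
/- Let δ > 0 and let f : (0, δ) → ℝ be differentiable with f'(x) > 0 for all x ∈ (0, δ). If f is bounded, then liminf_{x→0⁺} log(f'(x)) / (−log x) ≤ 1. -/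
open Set Filter Topology

/-- If `f : (0,δ) → ℝ` is differentiable with `f' > 0` and `f` is bounded,
then `liminf_{x→0⁺} log(f'(x))/(−log x) ≤ 1`. -/
theorem liminf_log_deriv_le_one
    (δ : ℝ) (hδ : 0 < δ) (f : ℝ → ℝ)
    (hdiff : ∀ x ∈ Ioo (0:ℝ) δ, DifferentiableAt ℝ f x)
    (hpos : ∀ x ∈ Ioo (0:ℝ) δ, 0 < deriv f x)
    (hbdd : ∃ M : ℝ, ∀ x ∈ Ioo (0:ℝ) δ, |f x| ≤ M) :
    Filter.liminf (fun x => Real.log (deriv f x) / (-Real.log x)) (𝓝[>] (0:ℝ)) ≤ 1 := by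
  by_contra hcon
  push_neg at hcon
  obtain ⟨M, hM⟩ := hbdd
  -- extract c > 1 with eventually c ≤ g x
  have hS : ∃ c : ℝ, 1 < c ∧
      ∀ᶠ x in 𝓝[>] (0:ℝ), c ≤ Real.log (deriv f x) / (-Real.log x) := by
    rw [Filter.liminf_eq] at hcon
    set S := {a : ℝ | ∀ᶠ x in 𝓝[>] (0:ℝ), a ≤ Real.log (deriv f x) / (-Real.log x)} with hSdef
    by_cases hne : S.Nonempty
    · by_cases hbd : BddAbove S
      · obtain ⟨c, hcS, hc⟩ := (lt_csSup_iff hbd hne).1 hcon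
        exact ⟨c, hc, hcS⟩
      · rw [Real.sSup_of_not_bddAbove hbd] at hcon; linarith
    · rw [Set.not_nonempty_iff_eq_empty.1 hne, Real.sSup_empty] at hcon; linarith
  obtain ⟨c, hc1, hev⟩ := hS
  rw [Filter.eventually_iff, mem_nhdsGT_iff_exists_Ioo_subset] at hev
  obtain ⟨u, hu, hsub⟩ := hev
  rw [mem_Ioi] at hu
  set ε := min u (min δ 1) with hε
  have hε0 : 0 < ε := lt_min hu (lt_min hδ one_pos)
  have hεδ : ε ≤ δ := le_trans (min_le_right _ _) (min_le_left _ _)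
  have hε1 : ε ≤ 1 := le_trans (min_le_right _ _) (min_le_right _ _)
  have hεu : ε ≤ u := min_le_left _ _
  -- key derivative bound
  have hderiv : ∀ x ∈ Ioo (0:ℝ) ε, x⁻¹ ≤ deriv f x := by
    intro x hx
    obtain ⟨hx0, hxε⟩ := hx
    have hxδ : x < δ := lt_of_lt_of_le hxε hεδ
    have hx1 : x < 1 := lt_of_lt_of_le hxε hε1
    have hd : 0 < deriv f x := hpos x ⟨hx0, hxδ⟩
    have hcx : c ≤ Real.log (deriv f x) / (-Real.log x) :=
      hsub ⟨hx0, lt_of_lt_of_le hxε hεu⟩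
    have hlog : Real.log x < 0 := Real.log_neg hx0 hx1
    have hB : 0 < -Real.log x := by linarith
    have h1 : c * (-Real.log x) ≤ Real.log (deriv f x) := (le_div_iff₀ hB).1 hcx
    have h2 : -Real.log x ≤ Real.log (deriv f x) := by nlinarith
    have h3 := Real.exp_le_exp.2 h2
    rwa [Real.exp_log hd, Real.exp_neg, Real.exp_log hx0] at h3
  -- monotonicity of f x - log x on [a, b] for 0 < a < b = ε/2
  set b := ε / 2 with hb
  have hb0 : 0 < b := by positivity
  have hbε : b < ε := by linarith
  have key : ∀ a ∈ Ioo (0:ℝ) b, Real.log b - Real.log a ≤ f b - f a := by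
    intro a ha
    obtain ⟨ha0, hab⟩ := ha
    have hsubIcc : Icc a b ⊆ Ioo (0:ℝ) ε := fun y hy =>
      ⟨lt_of_lt_of_le ha0 hy.1, lt_of_le_of_lt hy.2 hbε⟩
    have hsubIooδ : ∀ y ∈ Icc a b, y ∈ Ioo (0:ℝ) δ := fun y hy =>
      ⟨(hsubIcc hy).1, lt_of_lt_of_le (hsubIcc hy).2 hεδ⟩
    have hmono : MonotoneOn (fun x => f x - Real.log x) (Icc a b) := by
      apply monotoneOn_of_deriv_nonneg (convex_Icc a b)
      · apply ContinuousOn.sub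
        · intro y hy
          exact ((hdiff y (hsubIooδ y hy)).continuousAt).continuousWithinAt
        · exact Real.continuousOn_log.mono fun y hy =>
            ne_of_gt (hsubIcc hy).1
      · intro y hy
        rw [interior_Icc] at hy
        have hy' : y ∈ Icc a b := Ioo_subset_Icc_self hy
        exact ((hdiff y (hsubIooδ y hy')).sub
          (Real.differentiableAt_log (ne_of_gt (hsubIcc hy').1))).differentiableWithinAt
      · intro y hy
        rw [interior_Icc] at hy
        have hy' : y ∈ Icc a b := Ioo_subset_Icc_self hy
        have hy0 : 0 < y := (hsubIcc hy').1
        rw [deriv_fun_sub (hdiff y (hsubIooδ y hy'))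
          (Real.differentiableAt_log (ne_of_gt hy0)), Real.deriv_log]
        have := hderiv y (hsubIcc hy')
        linarith
    have := hmono (left_mem_Icc.2 (le_of_lt hab)) (right_mem_Icc.2 (le_of_lt hab))
      (le_of_lt hab)
    simp only at this
    linarith
  -- pick a small enough to contradict boundedness
  set a := min (b / 2) (Real.exp (Real.log b - 2 * M - 1)) with hadef
  have ha0 : 0 < a := lt_min (by positivity) (Real.exp_pos _)
  have hab : a < b := lt_of_le_of_lt (min_le_left _ _) (by linarith)
  have hloga : Real.log a ≤ Real.log b - 2 * M - 1 := by
    calc Real.log a ≤ Real.log (Real.exp (Real.log b - 2 * M - 1)) :=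
          Real.log_le_log ha0 (min_le_right _ _)
      _ = Real.log b - 2 * M - 1 := Real.log_exp _
  have hfa : |f a| ≤ M := hM a ⟨ha0, lt_of_lt_of_le (lt_of_lt_of_le hab (le_of_lt hbε)) hεδ⟩
  have hfb : |f b| ≤ M := hM b ⟨hb0, lt_of_lt_of_le hbε hεδ⟩
  have := key a ⟨ha0, hab⟩
  have h1 := abs_le.1 hfa
  have h2 := abs_le.1 hfb
  linarith
end

section
/- Let δ ∈ (0, 1], s ∈ (0, 1), and let g : [0, δ] → ℝ be continuous with g(0) = 0 and differentiable on (0, δ), with g'(y) < y^{s−1} for all y ∈ (0, δ). Then g(x) ≤ x^s / (2^s − 1) for all x ∈ (0, δ). -/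
/-!
Since `2 ^ s - 1 ≤ s` (Bernoulli), the function `x ↦ x ^ s / (2 ^ s - 1)` vanishes at `0` and has
derivative `s x ^ (s - 1) / (2 ^ s - 1) ≥ x ^ (s - 1) > g'(x)`, so by the mean value theorem it
dominates `g` on `(0, δ)`.
-/

open Set Filter Topology

lemma two_rpow_sub_one_pos {s : ℝ} (hs : 0 < s) : 0 < (2 : ℝ) ^ s - 1 :=
  sub_pos.2 (Real.one_lt_rpow one_lt_two hs)

lemma two_rpow_sub_one_le {s : ℝ} (hs0 : 0 ≤ s) (hs1 : s ≤ 1) : (2 : ℝ) ^ s - 1 ≤ s := by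
  have h := rpow_one_add_le_one_add_mul_self (s := 1) (by norm_num) hs0 hs1
  norm_num at h
  linarith

lemma rpow_sub_one_le_mul_rpow_sub_one_div {s y : ℝ} (hs0 : 0 < s) (hs1 : s ≤ 1) (hy : 0 < y) :
    y ^ (s - 1) ≤ s * y ^ (s - 1) / (2 ^ s - 1) := by
  rw [le_div_iff₀ (two_rpow_sub_one_pos hs0), mul_comm s]
  exact mul_le_mul_of_nonneg_left (two_rpow_sub_one_le hs0.le hs1) (Real.rpow_pos_of_pos hy _).le

lemma sub_le_sub_of_deriv_le {f g : ℝ → ℝ} {a b : ℝ} (hab : a ≤ b)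
    (hf : ContinuousOn f (Icc a b)) (hg : ContinuousOn g (Icc a b))
    (hfd : ∀ y ∈ Ioo a b, DifferentiableAt ℝ f y) (hgd : ∀ y ∈ Ioo a b, DifferentiableAt ℝ g y)
    (hle : ∀ y ∈ Ioo a b, deriv g y ≤ deriv f y) :
    g b - g a ≤ f b - f a := by
  have hmono : MonotoneOn (f - g) (Icc a b) := by
    refine monotoneOn_of_deriv_nonneg (convex_Icc a b) (hf.sub hg) ?_ ?_ <;> rw [interior_Icc]
    · exact fun y hy => ((hfd y hy).sub (hgd y hy)).differentiableWithinAt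
    · intro y hy
      rw [deriv_sub (hfd y hy) (hgd y hy)]
      exact sub_nonneg.2 (hle y hy)
  have := hmono (left_mem_Icc.2 hab) (right_mem_Icc.2 hab) hab
  simp only [Pi.sub_apply] at this
  linarith

theorem telescoping_upper_bound_general
    (δ s : ℝ) (hs : s ∈ Ioo (0:ℝ) 1)
    (g : ℝ → ℝ) (hcont : ContinuousOn g (Icc 0 δ)) (hg0 : g 0 = 0)
    (hdiff : ∀ y ∈ Ioo (0:ℝ) δ, DifferentiableAt ℝ g y)
    (hderiv : ∀ y ∈ Ioo (0:ℝ) δ, deriv g y < y ^ (s - 1)) :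
    ∀ x ∈ Ioo (0:ℝ) δ, g x ≤ x ^ s / (2 ^ s - 1) := by
  obtain ⟨hs0, hs1⟩ := hs
  intro x ⟨hx0, hxδ⟩
  have hsub : Ioo 0 x ⊆ Ioo 0 δ := Ioo_subset_Ioo_right hxδ.le
  have hpow : ∀ y ∈ Ioo (0:ℝ) x,
      HasDerivAt (fun t => t ^ s / (2 ^ s - 1)) (s * y ^ (s - 1) / (2 ^ s - 1)) y :=
    fun y hy => (Real.hasDerivAt_rpow_const (Or.inl hy.1.ne')).div_const _
  have key := sub_le_sub_of_deriv_le hx0.le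
    ((Real.continuous_rpow_const hs0.le).continuousOn.div_const _)
    (hcont.mono (Icc_subset_Icc_right hxδ.le))
    (fun y hy => (hpow y hy).differentiableAt) (fun y hy => hdiff y (hsub hy))
    (fun y hy => by
      rw [(hpow y hy).deriv]
      exact (hderiv y (hsub hy)).le.trans (rpow_sub_one_le_mul_rpow_sub_one_div hs0 hs1.le hy.1))
  simpa [hg0, Real.zero_rpow hs0.ne'] using key

/-- telescoping estimate.  Let `δ ∈ (0,1]`, `s ∈ (0,1)` and let
`g : [0,δ] → ℝ` be continuous with `g(0) = 0`, differentiable on `(0,δ)`, with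
`g'(y) < y^{s−1}` for all `y ∈ (0,δ)`.  Then `g(x) ≤ x^s/(2^s − 1)` for all `x ∈ (0,δ)`. -/
theorem telescoping_upper_bound
    (δ s : ℝ) (hδ0 : 0 < δ) (hδ1 : δ ≤ 1) (hs : s ∈ Ioo (0:ℝ) 1)
    (g : ℝ → ℝ) (hcont : ContinuousOn g (Icc 0 δ)) (hg0 : g 0 = 0)
    (hdiff : ∀ y ∈ Ioo (0:ℝ) δ, DifferentiableAt ℝ g y)
    (hderiv : ∀ y ∈ Ioo (0:ℝ) δ, deriv g y < y ^ (s - 1)) :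
    ∀ x ∈ Ioo (0:ℝ) δ, g x ≤ x ^ s / (2 ^ s - 1) :=
  telescoping_upper_bound_general δ s hs g hcont hg0 hdiff hderiv
end

section
/- Define f : [0,1] → [0,1] by f(x) = 2x for x ∈ [0, 1/2] and f(x) = −log 2 / log(x − 1/2) for x ∈ (1/2, 1], and set J_0 = (0, 1/2), J_1 = (1/2, 1). Let μ be any Borel probability measure on [0,1] such that for every n ≥ 1 and every word w ∈ {0,1}^n, μ({x ∈ [0,1] : f^i(x) ∈ J_{w_i} for all 0 ≤ i < n}) = 2^{−n}. Then ∫_{(1/2,1]} |log(x − 1/2)| dμ(x) = ∞; that is, μ is nonadapted with respect to 1/2. -/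
/-!
On the cylinder of the word `1 0ⁿ` the `n` doubling steps after the first iterate keep
`2ⁿ f(x) ≤ 1`, while `f(x) = log 2 / |log (x - 1/2)|`; so `|log (x - 1/2)| ≥ 2ⁿ log 2` there.
These cylinders are nested with measures `2^{-(n+1)}`, so the shells between consecutive ones
have measure `2^{-(n+2)}` and each contributes at least `(log 2)/4` to the integral.
-/

open Set Filter MeasureTheory Topology
open scoped ENNReal

/-- The interval map `f(x) = 2x` on `[0,1/2]`, `f(x) = −log 2 / log(x − 1/2)` on `(1/2,1]`. -/
noncomputable def logBranchMap (x : ℝ) : ℝ :=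
  if x ≤ 1 / 2 then 2 * x else -Real.log 2 / Real.log (x - 1 / 2)

/-- The open partition intervals `J_0 = (0,1/2)` and `J_1 = (1/2,1)`. -/
def branchInterval (i : ℕ) : Set ℝ :=
  if i = 0 then Ioo (0:ℝ) (1/2) else Ioo (1/2 : ℝ) 1

section Shells

open Function

variable {α : Type*}

lemma Antitone.pairwise_disjoint_sdiff_succ {D : ℕ → Set α} (hD : Antitone D) :
    Pairwise (Disjoint on fun n => D n \ D (n + 1)) :=
  (pairwise_disjoint_on _).2 fun _ _ hmn =>
    disjoint_sdiff_left.mono_right (sdiff_subset.trans (hD hmn))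

variable [MeasurableSpace α] {μ : Measure α}

lemma lintegral_eq_top_of_pairwise_disjoint {A : ℕ → Set α} {s : Set α} {g : α → ℝ≥0∞}
    {c : ℝ≥0∞} (hc : c ≠ 0) (hAm : ∀ n, MeasurableSet (A n))
    (hdisj : Pairwise (Disjoint on A)) (hAs : ∀ n, A n ⊆ s)
    (hg : ∀ n, c ≤ ∫⁻ x in A n, g x ∂μ) :
    ∫⁻ x in s, g x ∂μ = ⊤ := by
  refine top_le_iff.mp ?_
  calc ⊤ = ∑' _ : ℕ, c := (ENNReal.tsum_const_eq_top_of_ne_zero hc).symm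
    _ ≤ ∑' n, ∫⁻ x in A n, g x ∂μ := ENNReal.tsum_le_tsum hg
    _ = ∫⁻ x in ⋃ n, A n, g x ∂μ := (lintegral_iUnion hAm hdisj _).symm
    _ ≤ ∫⁻ x in s, g x ∂μ := lintegral_mono_set (iUnion_subset hAs)

lemma measure_sdiff_succ_of_measure_eq_inv_two_pow {D : ℕ → Set α} (hD : Antitone D)
    (hDm : ∀ n, MeasurableSet (D n)) (hμ : ∀ n, μ (D n) = 2⁻¹ ^ (n + 1)) (n : ℕ) :
    μ (D n \ D (n + 1)) = 2⁻¹ ^ (n + 2) := by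
  rw [measure_sdiff (hD n.le_succ) (hDm _).nullMeasurableSet (by simp [hμ]), hμ, hμ,
    pow_succ _ (n + 1), ← div_eq_mul_inv]
  exact ENNReal.sub_half (by simp)

lemma lintegral_eq_top_of_two_pow_le {D : ℕ → Set α} {s : Set α} {g : α → ℝ≥0∞} {c : ℝ≥0∞}
    (hc : c ≠ 0) (hD : Antitone D) (hDm : ∀ n, MeasurableSet (D n))
    (hμ : ∀ n, μ (D n) = 2⁻¹ ^ (n + 1)) (hs : D 0 ⊆ s) (hg : ∀ n, ∀ x ∈ D n, c * 2 ^ n ≤ g x) :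
    ∫⁻ x in s, g x ∂μ = ⊤ := by
  have hshell : ∀ n, MeasurableSet (D n \ D (n + 1)) := fun n => (hDm n).diff (hDm _)
  refine lintegral_eq_top_of_pairwise_disjoint (c := c * 2⁻¹ ^ 2) (by simpa using hc) hshell
    hD.pairwise_disjoint_sdiff_succ (fun n => sdiff_subset.trans ((hD n.zero_le).trans hs))
    fun n => ?_
  have hcancel : (2 : ℝ≥0∞) ^ n * 2⁻¹ ^ n = 1 := by
    rw [← mul_pow, ENNReal.mul_inv_cancel two_ne_zero ENNReal.ofNat_ne_top, one_pow]
  calc c * 2⁻¹ ^ 2 = c * 2 ^ n * 2⁻¹ ^ (n + 2) := by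
        rw [pow_add, ← mul_assoc, mul_assoc c, hcancel, mul_one]
    _ = c * 2 ^ n * μ (D n \ D (n + 1)) := by
        rw [measure_sdiff_succ_of_measure_eq_inv_two_pow hD hDm hμ]
    _ = ∫⁻ _ in D n \ D (n + 1), c * 2 ^ n ∂μ := (setLIntegral_const _ _).symm
    _ ≤ ∫⁻ x in D n \ D (n + 1), g x ∂μ :=
        setLIntegral_mono' (hshell n) fun x hx => hg n x hx.1

end Shells

section Cylinders

variable {α : Type*}

def itineraryCylinder (f : α → α) (J : ℕ → Set α) (w : ℕ → ℕ) (n : ℕ) : Set α :=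
  {x | ∀ i, i < n → f^[i] x ∈ J (w i)}

lemma itineraryCylinder_antitone (f : α → α) (J : ℕ → Set α) (w : ℕ → ℕ) :
    Antitone (itineraryCylinder f J w) :=
  fun _ _ hmn _ hx i hi => hx i (hi.trans_le hmn)

lemma measurableSet_itineraryCylinder [MeasurableSpace α] {f : α → α} {J : ℕ → Set α}
    (hf : Measurable f) (hJ : ∀ i, MeasurableSet (J i)) (w : ℕ → ℕ) (n : ℕ) :
    MeasurableSet (itineraryCylinder f J w n) := by
  have : itineraryCylinder f J w n = ⋂ i, ⋂ (_ : i < n), f^[i] ⁻¹' J (w i) := by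
    ext x; simp [itineraryCylinder]
  rw [this]
  exact .iInter fun i => .iInter fun _ => (hJ (w i)).preimage (hf.iterate i)

end Cylinders

lemma logBranchMap_measurable : Measurable logBranchMap :=
  Measurable.ite (measurableSet_le measurable_id measurable_const)
    (measurable_const.mul measurable_id)
    (measurable_const.div (Real.measurable_log.comp (measurable_id.sub measurable_const)))

lemma measurableSet_branchInterval (i : ℕ) : MeasurableSet (branchInterval i) := by
  unfold branchInterval; split <;> exact measurableSet_Ioo

lemma logBranchMap_iterate_of_forall_le_half {y : ℝ} {m : ℕ}
    (h : ∀ j < m, logBranchMap^[j] y ≤ 1 / 2) : logBranchMap^[m] y = 2 ^ m * y := by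
  induction m with
  | zero => simp
  | succ m ih =>
    rw [Function.iterate_succ_apply', logBranchMap, if_pos (h m m.lt_succ_self),
      ih fun j hj => h j (hj.trans m.lt_succ_self), pow_succ]
    ring

lemma logBranchMap_of_mem_Ioo {x : ℝ} (hx : x ∈ Ioo (1 / 2 : ℝ) (3 / 2)) :
    logBranchMap x = Real.log 2 / |Real.log (x - 1 / 2)| := by
  have hlog : Real.log (x - 1 / 2) < 0 := Real.log_neg (by linarith [hx.1]) (by linarith [hx.2])
  rw [logBranchMap, if_neg (not_le.2 hx.1), abs_of_neg hlog, div_neg, neg_div]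

lemma log_two_le_abs_log_sub_half {x : ℝ} (hx : x ∈ Ioo (1 / 2 : ℝ) 1) :
    Real.log 2 ≤ |Real.log (x - 1 / 2)| := by
  have hpos : 0 < x - 1 / 2 := by linarith [hx.1]
  have hle : Real.log (x - 1 / 2) ≤ Real.log 2⁻¹ := Real.log_le_log hpos (by linarith [hx.2])
  rw [Real.log_inv] at hle
  exact (le_neg.1 hle).trans (neg_le_abs _)

def cylinderOneZeros (n : ℕ) : Set ℝ :=
  itineraryCylinder logBranchMap branchInterval (fun i => if i = 0 then 1 else 0) (n + 1)

lemma cylinderOneZeros_antitone : Antitone cylinderOneZeros :=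
  fun _ _ hmn => itineraryCylinder_antitone _ _ _ (Nat.succ_le_succ hmn)

lemma measurableSet_cylinderOneZeros (n : ℕ) : MeasurableSet (cylinderOneZeros n) :=
  measurableSet_itineraryCylinder logBranchMap_measurable measurableSet_branchInterval _ _

lemma cylinderOneZeros_subset_Ioo (n : ℕ) : cylinderOneZeros n ⊆ Ioo (1 / 2 : ℝ) 1 :=
  fun x hx => by simpa [branchInterval] using hx 0 n.succ_pos

lemma two_pow_mul_log_two_le_abs_log {n : ℕ} {x : ℝ} (hx : x ∈ cylinderOneZeros n) :
    2 ^ n * Real.log 2 ≤ |Real.log (x - 1 / 2)| := by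
  have hx₁ := cylinderOneZeros_subset_Ioo n hx
  have hL := log_two_le_abs_log_sub_half hx₁
  cases n with
  | zero => simpa using hL
  | succ m =>
    have hJ₀ : ∀ j < m + 1, logBranchMap^[j] (logBranchMap x) ∈ Ioo (0 : ℝ) (1 / 2) := by
      intro j hj
      rw [← Function.iterate_succ_apply]
      simpa [branchInterval] using hx (j + 1) (by omega)
    have hdouble : 2 ^ m * logBranchMap x < 1 / 2 := by
      rw [← logBranchMap_iterate_of_forall_le_half fun j hj => (hJ₀ j (by omega)).2.le]
      exact (hJ₀ m m.lt_succ_self).2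
    rw [logBranchMap_of_mem_Ioo ⟨hx₁.1, by linarith [hx₁.2]⟩] at hdouble
    have hLpos : 0 < |Real.log (x - 1 / 2)| := (Real.log_pos one_lt_two).trans_le hL
    rw [mul_div_assoc', div_lt_iff₀ hLpos] at hdouble
    rw [pow_succ]
    linarith

theorem logBranchMap_mme_nonadapted_general
    (μ : Measure ℝ)
    (hcyl : ∀ n : ℕ, 1 ≤ n → ∀ w : ℕ → ℕ, (∀ k, k < n → w k < 2) →
      μ {x : ℝ | ∀ i, i < n → logBranchMap^[i] x ∈ branchInterval (w i)} =
        (2 : ℝ≥0∞)⁻¹ ^ n) :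
    (∫⁻ x in Ioc (1/2 : ℝ) 1, ENNReal.ofReal |Real.log (x - 1/2)| ∂μ) = ⊤ := by
  refine lintegral_eq_top_of_two_pow_le (c := ENNReal.ofReal (Real.log 2))
    (ENNReal.ofReal_pos.2 (Real.log_pos one_lt_two)).ne' cylinderOneZeros_antitone
    measurableSet_cylinderOneZeros
    (fun n => hcyl (n + 1) n.succ_pos _ fun k _ => by split <;> omega)
    ((cylinderOneZeros_subset_Ioo 0).trans Ioo_subset_Ioc_self) fun n x hx => ?_
  rw [← ENNReal.ofReal_ofNat 2, ← ENNReal.ofReal_pow zero_le_two,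
    ← ENNReal.ofReal_mul (Real.log_pos one_lt_two).le, mul_comm]
  exact ENNReal.ofReal_le_ofReal (two_pow_mul_log_two_le_abs_log hx)

/-- For the map `f(x) = 2x` on `[0,1/2]`, `f(x) = −log2/log(x−1/2)` on
`(1/2,1]`, any Borel probability measure giving each dynamical `n`-cylinder measure `2^{−n}`
(e.g. the measure of maximal entropy) satisfies `∫_{(1/2,1]} |log(x−1/2)| dμ = ∞`;
that is, `μ` is nonadapted with respect to `1/2`. -/
theorem logBranchMap_mme_nonadapted
    (μ : Measure ℝ) [IsProbabilityMeasure μ]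
    (hcyl : ∀ n : ℕ, 1 ≤ n → ∀ w : ℕ → ℕ, (∀ k, k < n → w k < 2) →
      μ {x : ℝ | ∀ i, i < n → logBranchMap^[i] x ∈ branchInterval (w i)} =
        (2 : ℝ≥0∞)⁻¹ ^ n) :
    (∫⁻ x in Ioc (1/2 : ℝ) 1, ENNReal.ofReal |Real.log (x - 1/2)| ∂μ) = ⊤ :=
  logBranchMap_mme_nonadapted_general μ hcyl
end

section
/- Let ρ ∈ (0, e^{−e^e}), let g(x) = 1/log(log(−log x)) for x ∈ (0, ρ), and let f : [0,1] → [0,1] be a piecewise C¹ uniformly expanding Markov map with partition points 0 < x_1 < 1 (where ρ < x_1), whose two branch extensions f̃_0 : [0, x_1] → [0,1] and f̃_1 : [x_1, 1] → [0,1] are increasing bijections onto [0,1], with f(0) = 0 and f(x) = x^{1/(2 − g(x))} for all x ∈ (0, ρ). Let μ be a Borel probability measure on [0,1] such that for every n ≥ 1 and every word w ∈ {0,1}^n, μ(⋂_{i=0}^{n−1} f^{−i}(int I_{w_i})) = 2^{−n}, where I_0 = [0, x_1] and I_1 = [x_1, 1]. Then ∫_{(0,1]} |log x| dμ(x) < ∞;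 that is, μ is adapted with respect to 0. -/
open Set Filter MeasureTheory Topology
open scoped ENNReal

lemma TEA_loglog_gt_one {x : ℝ} (hx : Real.exp (Real.exp 1) < x) :
    1 < Real.log (Real.log x) := by
  have hx0 : 0 < x := lt_trans (Real.exp_pos _) hx
  have h1 : Real.exp 1 < Real.log x := (Real.lt_log_iff_exp_lt hx0).2 hx
  have h2 := Real.log_lt_log (Real.exp_pos 1) h1
  simpa using h2

lemma TEA_hmono {M L : ℝ} (hM : Real.exp (Real.exp 1) < M) (hML : M ≤ L) :
    M / (2 - 1 / Real.log (Real.log M)) ≤ L / (2 - 1 / Real.log (Real.log L)) := by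
  have hL : Real.exp (Real.exp 1) < L := lt_of_lt_of_le hM hML
  have hM0 : 0 < M := lt_trans (Real.exp_pos _) hM
  have hL0 : 0 < L := lt_trans (Real.exp_pos _) hL
  have hlogM : Real.exp 1 < Real.log M := (Real.lt_log_iff_exp_lt hM0).2 hM
  have hlogL : Real.exp 1 < Real.log L := (Real.lt_log_iff_exp_lt hL0).2 hL
  have he1 : (1:ℝ) < Real.exp 1 := by
    have := Real.exp_one_gt_d9; linarith
  have hlogM1 : 1 < Real.log M := lt_trans he1 hlogM
  have hlogL1 : 1 < Real.log L := lt_trans he1 hlogL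
  have hA1 : 1 < Real.log (Real.log M) := TEA_loglog_gt_one hM
  have hB1 : 1 < Real.log (Real.log L) := TEA_loglog_gt_one hL
  set A := Real.log (Real.log M) with hA
  set B := Real.log (Real.log L) with hB
  have hlogML : Real.log M ≤ Real.log L := Real.log_le_log hM0 hML
  have hAB : A ≤ B := Real.log_le_log (by linarith) hlogML
  have h1 : B - A ≤ Real.log L / Real.log M - 1 := by
    have hdiv : Real.log (Real.log L / Real.log M) = B - A :=
      Real.log_div (by linarith) (by linarith)
    have h := Real.log_le_sub_one_of_pos (div_pos (by linarith : (0:ℝ) < Real.log L)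
      (by linarith : (0:ℝ) < Real.log M))
    rw [hdiv] at h; linarith
  have h2 : Real.log L - Real.log M ≤ L / M - 1 := by
    have hdiv : Real.log (L / M) = Real.log L - Real.log M :=
      Real.log_div (ne_of_gt hL0) (ne_of_gt hM0)
    have h := Real.log_le_sub_one_of_pos (div_pos hL0 hM0)
    rw [hdiv] at h
    linarith
  have e1 : 1/A - 1/B = (B - A)/(A*B) := by field_simp
  have e2 : (B - A)/(A*B) ≤ B - A := div_le_self (by linarith) (by nlinarith)
  have e3 : Real.log L / Real.log M - 1 = (Real.log L - Real.log M)/Real.log M := by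
    field_simp
  have e4 : (Real.log L - Real.log M)/Real.log M ≤ Real.log L - Real.log M :=
    div_le_self (by linarith) (le_of_lt hlogM1)
  have e5 : L / M - 1 = (L - M)/M := by field_simp
  have key : M * (1/A - 1/B) ≤ L - M := by
    have k1 : 1/A - 1/B ≤ (L - M)/M := by
      rw [e1]
      calc (B - A)/(A*B) ≤ B - A := e2
        _ ≤ (Real.log L - Real.log M)/Real.log M := by rw [← e3]; exact h1
        _ ≤ Real.log L - Real.log M := e4
        _ ≤ (L - M)/M := by rw [← e5]; exact h2
    calc M * (1/A - 1/B) ≤ M * ((L-M)/M) := by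
          apply mul_le_mul_of_nonneg_left k1 hM0.le
      _ = L - M := by field_simp
  have hDA : 0 < 2 - 1/A := by
    have : 1/A < 1 := by rw [div_lt_one (by linarith)]; linarith
    linarith
  have hDB : 0 < 2 - 1/B := by
    have : 1/B < 1 := by rw [div_lt_one (by linarith)]; linarith
    linarith
  rw [div_le_div_iff₀ hDA hDB]
  have hfin : 0 ≤ (L - M) * (1 - 1/A) := by
    apply mul_nonneg (by linarith)
    have : 1/A < 1 := by rw [div_lt_one (by linarith)]; linarith
    linarith
  nlinarith [key, hfin]

lemma TEA_log_le_two_sqrt {x : ℝ} (hx : 1 ≤ x) : Real.log x ≤ 2 * Real.sqrt x := by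
  have h0 : (0:ℝ) ≤ x := by linarith
  have hs : 0 < Real.sqrt x := Real.sqrt_pos.2 (by linarith)
  have h1 := Real.log_le_sub_one_of_pos hs
  have h2 := Real.log_sqrt h0
  linarith

lemma TEA_sqrt_succ {a : ℝ} (ha : 1 ≤ a) :
    Real.sqrt (a+1) ≤ Real.sqrt a + 1/(2*Real.sqrt a) := by
  have h0 : (0:ℝ) ≤ a := by linarith
  have hs : 0 < Real.sqrt a := Real.sqrt_pos.2 (by linarith)
  have h2 : Real.sqrt a ^ 2 = a := Real.sq_sqrt h0
  have hexp : (Real.sqrt a + 1/(2*Real.sqrt a))^2 = a + 1 + (1/(2*Real.sqrt a))^2 := by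
    have hne : Real.sqrt a ≠ 0 := ne_of_gt hs
    field_simp
    nlinarith [h2]
  have hle : a + 1 ≤ (Real.sqrt a + 1/(2*Real.sqrt a))^2 := by
    nlinarith [sq_nonneg (1/(2*Real.sqrt a))]
  calc Real.sqrt (a+1) ≤ Real.sqrt ((Real.sqrt a + 1/(2*Real.sqrt a))^2) :=
        Real.sqrt_le_sqrt hle
    _ = Real.sqrt a + 1/(2*Real.sqrt a) := Real.sqrt_sq (by positivity)

lemma TEA_exp_quartic {t : ℝ} (ht : 0 ≤ t) : (t/4)^4 ≤ Real.exp t := by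
  have h1 : t/4 ≤ Real.exp (t/4) := by linarith [Real.add_one_le_exp (t/4)]
  have h2 := pow_le_pow_left₀ (by positivity : (0:ℝ) ≤ t/4) h1 4
  have h3 : (Real.exp (t/4))^4 = Real.exp t := by
    rw [← Real.exp_nat_mul]
    norm_num
    ring
  linarith

lemma TEA_summable_exp_sqrt {c : ℝ} (hc : 0 < c) :
    Summable (fun n : ℕ => Real.exp (-(c * Real.sqrt ((n:ℝ)+3)))) := by
  have hbound : ∀ n : ℕ, Real.exp (-(c * Real.sqrt ((n:ℝ)+3)))
      ≤ 256/c^4 * (1/((n:ℝ)+3)^2) := by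
    intro n
    have hn3 : (0:ℝ) < (n:ℝ)+3 := by positivity
    have hsq : (Real.sqrt ((n:ℝ)+3))^2 = (n:ℝ)+3 := Real.sq_sqrt hn3.le
    have h5 : c^4 * ((n:ℝ)+3)^2 / 256 ≤ Real.exp (c * Real.sqrt ((n:ℝ)+3)) := by
      have hq := TEA_exp_quartic (t := c * Real.sqrt ((n:ℝ)+3)) (by positivity)
      calc c^4 * ((n:ℝ)+3)^2/256 = (c*Real.sqrt ((n:ℝ)+3)/4)^4 := by
            rw [show ((n:ℝ)+3)^2 = ((Real.sqrt ((n:ℝ)+3))^2)^2 by rw [hsq]]; ring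
        _ ≤ _ := hq
    rw [Real.exp_neg]
    have hpos : (0:ℝ) < c^4*((n:ℝ)+3)^2/256 := by positivity
    calc (Real.exp (c * Real.sqrt ((n:ℝ)+3)))⁻¹ ≤ (c^4*((n:ℝ)+3)^2/256)⁻¹ := by
          apply inv_anti₀ hpos h5
      _ = 256/c^4 * (1/((n:ℝ)+3)^2) := by field_simp
  have hsum : Summable (fun n : ℕ => 256/c^4 * (1/((n:ℝ)+3)^2)) := by
    apply Summable.mul_left
    have h := (Real.summable_one_div_nat_pow (p := 2)).2 (by norm_num)
    have h2 := (summable_nat_add_iff 3).2 h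
    have : (fun n : ℕ => 1/((n:ℝ)+3)^2) = (fun n : ℕ => 1/(((n+3:ℕ):ℝ))^2) := by
      funext n; push_cast; ring_nf
    rw [this]
    exact_mod_cast h2
  exact Summable.of_nonneg_of_le (fun n => (Real.exp_pos _).le) hbound hsum

noncomputable def TEA_ell (L0 : ℝ) : ℕ → ℝ
  | 0 => L0
  | n+1 => TEA_ell L0 n * (2 - 1 / Real.log (Real.log (2 * TEA_ell L0 n)))

section ell
variable {L0 : ℝ} (hL0 : Real.exp (Real.exp 1) < L0)
include hL0

lemma TEA_ell_gt : ∀ n, Real.exp (Real.exp 1) < TEA_ell L0 n := by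
  intro n
  induction n with
  | zero => exact hL0
  | succ n ih =>
    have hpos : 0 < TEA_ell L0 n := lt_trans (Real.exp_pos _) ih
    have h2x : Real.exp (Real.exp 1) < 2 * TEA_ell L0 n := by linarith
    have hB := TEA_loglog_gt_one h2x
    have hu : 1 / Real.log (Real.log (2 * TEA_ell L0 n)) < 1 := by
      rw [div_lt_one (by linarith)]; linarith
    have : TEA_ell L0 n < TEA_ell L0 n * (2 - 1 / Real.log (Real.log (2 * TEA_ell L0 n))) := by
      nlinarith
    calc Real.exp (Real.exp 1) < TEA_ell L0 n := ih
      _ < TEA_ell L0 (n+1) := this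

lemma TEA_ell_lt_succ : ∀ n, TEA_ell L0 n < TEA_ell L0 (n+1) := by
  intro n
  have ih := TEA_ell_gt hL0 n
  have hpos : 0 < TEA_ell L0 n := lt_trans (Real.exp_pos _) ih
  have h2x : Real.exp (Real.exp 1) < 2 * TEA_ell L0 n := by linarith
  have hB := TEA_loglog_gt_one h2x
  have hu : 1 / Real.log (Real.log (2 * TEA_ell L0 n)) < 1 := by
    rw [div_lt_one (by linarith)]; linarith
  show TEA_ell L0 n < TEA_ell L0 n * (2 - 1 / Real.log (Real.log (2 * TEA_ell L0 n)))
  nlinarith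

lemma TEA_ell_mono : Monotone (TEA_ell L0) :=
  monotone_nat_of_le_succ (fun n => (TEA_ell_lt_succ hL0 n).le)

lemma TEA_ell_succ_le : ∀ n, TEA_ell L0 (n+1) ≤ 2 * TEA_ell L0 n := by
  intro n
  have ih := TEA_ell_gt hL0 n
  have hpos : 0 < TEA_ell L0 n := lt_trans (Real.exp_pos _) ih
  have h2x : Real.exp (Real.exp 1) < 2 * TEA_ell L0 n := by linarith
  have hB := TEA_loglog_gt_one h2x
  have hu : 0 < 1 / Real.log (Real.log (2 * TEA_ell L0 n)) := by positivity
  show TEA_ell L0 n * (2 - 1 / Real.log (Real.log (2 * TEA_ell L0 n))) ≤ 2 * TEA_ell L0 n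
  nlinarith

lemma TEA_ell_upper : ∀ n, TEA_ell L0 n ≤ 2^n * L0 := by
  intro n
  induction n with
  | zero => simp [TEA_ell]
  | succ n ih =>
    calc TEA_ell L0 (n+1) ≤ 2 * TEA_ell L0 n := TEA_ell_succ_le hL0 n
      _ ≤ 2 * (2^n * L0) := by linarith
      _ = 2^(n+1) * L0 := by ring

/-- the key dynamical step in log coordinates -/
lemma TEA_step (n : ℕ) {L : ℝ} (hL : TEA_ell L0 (n+1) ≤ L) :
    TEA_ell L0 n ≤ L / (2 - 1 / Real.log (Real.log L)) := by
  have hgt := TEA_ell_gt hL0 n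
  have hgt1 := TEA_ell_gt hL0 (n+1)
  have hpos : 0 < TEA_ell L0 n := lt_trans (Real.exp_pos _) hgt
  have h2x : Real.exp (Real.exp 1) < 2 * TEA_ell L0 n := by linarith
  have hBB := TEA_loglog_gt_one h2x
  -- first: ell n ≤ ell (n+1) / (2 - u(ell (n+1)))
  have hle2 : TEA_ell L0 (n+1) ≤ 2 * TEA_ell L0 n := TEA_ell_succ_le hL0 n
  have hA1 : 1 < Real.log (Real.log (TEA_ell L0 (n+1))) := TEA_loglog_gt_one hgt1
  have humono : 1 / Real.log (Real.log (2 * TEA_ell L0 n))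
      ≤ 1 / Real.log (Real.log (TEA_ell L0 (n+1))) := by
    have hl1 : Real.exp 1 < Real.log (TEA_ell L0 (n+1)) :=
      (Real.lt_log_iff_exp_lt (lt_trans (Real.exp_pos _) hgt1)).2 hgt1
    apply one_div_le_one_div_of_le (by linarith)
    apply Real.log_le_log (by linarith [Real.exp_pos 1])
    exact Real.log_le_log (lt_trans (Real.exp_pos _) hgt1) hle2
  have hu1 : 1 / Real.log (Real.log (TEA_ell L0 (n+1))) < 1 := by
    rw [div_lt_one (by linarith)]; linarith
  have hD : 0 < 2 - 1 / Real.log (Real.log (TEA_ell L0 (n+1))) := by linarith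
  have h1 : TEA_ell L0 n ≤ TEA_ell L0 (n+1) / (2 - 1 / Real.log (Real.log (TEA_ell L0 (n+1)))) := by
    rw [le_div_iff₀ hD]
    have heq : TEA_ell L0 (n+1) = TEA_ell L0 n * (2 - 1 / Real.log (Real.log (2 * TEA_ell L0 n))) := rfl
    have hmm := mul_le_mul_of_nonneg_left
      (show 2 - 1 / Real.log (Real.log (TEA_ell L0 (n+1)))
        ≤ 2 - 1 / Real.log (Real.log (2 * TEA_ell L0 n)) by linarith) hpos.le
    exact hmm.trans_eq heq.symm
  have h2 := TEA_hmono hgt1 hL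
  linarith

lemma TEA_ulow (n : ℕ) :
    1 / ((2 + Real.log (Real.log 2 + Real.log L0)) * Real.sqrt ((n:ℝ)+3))
      ≤ 1 / Real.log (Real.log (2 * TEA_ell L0 (n+2))) := by
  set K := Real.log 2 + Real.log L0 with hK
  have hL0pos : 0 < L0 := lt_trans (Real.exp_pos _) hL0
  have hlogL0 : Real.exp 1 < Real.log L0 := (Real.lt_log_iff_exp_lt hL0pos).2 hL0
  have he1 : (1:ℝ) < Real.exp 1 := by have := Real.exp_one_gt_d9; linarith
  have hKe : Real.exp 1 < K := by
    have : (0:ℝ) < Real.log 2 := Real.log_pos (by norm_num)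
    simp only [hK]; linarith
  have hlogK : 0 < Real.log K := Real.log_pos (by linarith)
  have hgt := TEA_ell_gt hL0 (n+2)
  have hellpos : 0 < TEA_ell L0 (n+2) := lt_trans (Real.exp_pos _) hgt
  have h2gt : Real.exp (Real.exp 1) < 2 * TEA_ell L0 (n+2) := by linarith
  have hBB := TEA_loglog_gt_one h2gt
  have hsq1 : (1:ℝ) ≤ Real.sqrt ((n:ℝ)+3) := by
    rw [show (1:ℝ) = Real.sqrt 1 by simp]
    exact Real.sqrt_le_sqrt (by push_cast; linarith [Nat.cast_nonneg (α := ℝ) n])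
  have hsqpos : (0:ℝ) < Real.sqrt ((n:ℝ)+3) := by linarith
  -- log (2 ell (n+2)) ≤ (n+3) * K
  have h2ell : 2 * TEA_ell L0 (n+2) ≤ 2^(n+3) * L0 := by
    have h := TEA_ell_upper hL0 (n+2)
    have : (2:ℝ)^(n+3) = 2 * 2^(n+2) := by ring
    rw [this]; nlinarith
  have hlog1 : Real.log (2 * TEA_ell L0 (n+2)) ≤ ((n:ℝ)+3) * K := by
    have hmono := Real.log_le_log (by linarith) h2ell
    have heq : Real.log ((2:ℝ)^(n+3) * L0) = ((n:ℝ)+3) * Real.log 2 + Real.log L0 := by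
      rw [Real.log_mul (by positivity) (ne_of_gt hL0pos), Real.log_pow]
      push_cast; ring
    rw [heq] at hmono
    have hn1 : (1:ℝ) ≤ (n:ℝ)+3 := by linarith [Nat.cast_nonneg (α := ℝ) n]
    have hlog2 : (0:ℝ) < Real.log 2 := Real.log_pos (by norm_num)
    simp only [hK]
    nlinarith
  -- log log (2 ell (n+2)) ≤ (2 + log K) √(n+3)
  have hloglog : Real.log (Real.log (2 * TEA_ell L0 (n+2)))
      ≤ (2 + Real.log K) * Real.sqrt ((n:ℝ)+3) := by
    have hlogpos : 0 < Real.log (2 * TEA_ell L0 (n+2)) := by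
      have := (Real.lt_log_iff_exp_lt (by linarith : (0:ℝ) < 2 * TEA_ell L0 (n+2))).2 h2gt
      linarith
    have h1 : Real.log (Real.log (2 * TEA_ell L0 (n+2))) ≤ Real.log (((n:ℝ)+3) * K) :=
      Real.log_le_log hlogpos hlog1
    have h2 : Real.log (((n:ℝ)+3) * K) = Real.log ((n:ℝ)+3) + Real.log K :=
      Real.log_mul (by linarith [Nat.cast_nonneg (α := ℝ) n]) (by linarith)
    have h3 : Real.log ((n:ℝ)+3) ≤ 2 * Real.sqrt ((n:ℝ)+3) :=
      TEA_log_le_two_sqrt (by linarith [Nat.cast_nonneg (α := ℝ) n])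
    have h4 : Real.log K ≤ Real.log K * Real.sqrt ((n:ℝ)+3) := by nlinarith
    rw [h2] at h1
    nlinarith
  apply one_div_le_one_div_of_le (by linarith) hloglog

lemma TEA_summable_a :
    Summable (fun n : ℕ => TEA_ell L0 (n+2) * (1/2:ℝ)^(n+1)) := by
  set K := Real.log 2 + Real.log L0 with hK
  have hL0pos : 0 < L0 := lt_trans (Real.exp_pos _) hL0
  have hlogL0 : Real.exp 1 < Real.log L0 := (Real.lt_log_iff_exp_lt hL0pos).2 hL0
  have he1 : (1:ℝ) < Real.exp 1 := by have := Real.exp_one_gt_d9; linarith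
  have hKe : Real.exp 1 < K := by
    have : (0:ℝ) < Real.log 2 := Real.log_pos (by norm_num)
    simp only [hK]; linarith
  have hlogK : 0 < Real.log K := Real.log_pos (by linarith)
  set c0 : ℝ := 1/(2 + Real.log K) with hc0def
  have hc0 : 0 < c0 := by positivity
  set a : ℕ → ℝ := fun n => TEA_ell L0 (n+2) * (1/2:ℝ)^(n+1) with ha
  have hapos : ∀ n, 0 < a n := by
    intro n
    have := TEA_ell_gt hL0 (n+2)
    have : 0 < TEA_ell L0 (n+2) := lt_trans (Real.exp_pos _) this
    positivity
  have ratio : ∀ n : ℕ, a (n+1) ≤ a n * Real.exp (-(c0/(2*Real.sqrt ((n:ℝ)+3)))) := by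
    intro n
    have hsq1 : (1:ℝ) ≤ Real.sqrt ((n:ℝ)+3) := by
      rw [show (1:ℝ) = Real.sqrt 1 by simp]
      exact Real.sqrt_le_sqrt (by push_cast; linarith [Nat.cast_nonneg (α := ℝ) n])
    have hsqpos : (0:ℝ) < Real.sqrt ((n:ℝ)+3) := by linarith
    have hulow := TEA_ulow hL0 n
    rw [← hK] at hulow
    have hgt := TEA_ell_gt hL0 (n+2)
    have hellpos : 0 < TEA_ell L0 (n+2) := lt_trans (Real.exp_pos _) hgt
    have h2gt : Real.exp (Real.exp 1) < 2 * TEA_ell L0 (n+2) := by linarith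
    have hBB := TEA_loglog_gt_one h2gt
    set u := 1 / Real.log (Real.log (2 * TEA_ell L0 (n+2))) with hu
    have heq : TEA_ell L0 (n+3) = TEA_ell L0 (n+2) * (2 - u) := rfl
    have hstep1 : a (n+1) = a n * ((2 - u)/2) := by
      show TEA_ell L0 (n+3) * (1/2:ℝ)^(n+2) = _
      rw [heq]; ring
    have hc0u : c0 / Real.sqrt ((n:ℝ)+3) ≤ u := by
      have : c0 / Real.sqrt ((n:ℝ)+3)
          = 1 / ((2 + Real.log K) * Real.sqrt ((n:ℝ)+3)) := by
        rw [hc0def]; field_simp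
      rw [this]; exact hulow
    have hexp : (2 - u)/2 ≤ Real.exp (-(c0/(2*Real.sqrt ((n:ℝ)+3)))) := by
      have h1 := Real.add_one_le_exp (-(c0/(2*Real.sqrt ((n:ℝ)+3))))
      have h2 : (2 - u)/2 = 1 - u/2 := by ring
      have h3 : c0/(2*Real.sqrt ((n:ℝ)+3)) = (c0/Real.sqrt ((n:ℝ)+3))/2 := by
        ring
      rw [h2]
      calc 1 - u/2 ≤ 1 - (c0/Real.sqrt ((n:ℝ)+3))/2 := by linarith
        _ = -(c0/(2*Real.sqrt ((n:ℝ)+3))) + 1 := by rw [h3]; ring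
        _ ≤ _ := h1
    rw [hstep1]
    exact mul_le_mul_of_nonneg_left hexp (hapos n).le
  have bound : ∀ n : ℕ, a n ≤ (a 0 * Real.exp (c0*Real.sqrt 3)) *
      Real.exp (-(c0*Real.sqrt ((n:ℝ)+3))) := by
    intro n
    induction n with
    | zero =>
      have h30 : ((0:ℕ):ℝ) + 3 = 3 := by norm_num
      rw [h30, mul_assoc, ← Real.exp_add, add_neg_cancel, Real.exp_zero, mul_one]
    | succ n ih =>
      have hsq1 : (1:ℝ) ≤ (n:ℝ)+3 := by linarith [Nat.cast_nonneg (α := ℝ) n]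
      have hsqpos : (0:ℝ) < Real.sqrt ((n:ℝ)+3) := Real.sqrt_pos.2 (by linarith)
      have hsucc := TEA_sqrt_succ hsq1
      have hcast : (((n+1:ℕ)):ℝ) + 3 = ((n:ℝ)+3) + 1 := by push_cast; ring
      have hkey : c0 * Real.sqrt ((((n+1:ℕ)):ℝ) + 3)
          ≤ c0*Real.sqrt ((n:ℝ)+3) + c0/(2*Real.sqrt ((n:ℝ)+3)) := by
        rw [hcast]
        have := mul_le_mul_of_nonneg_left hsucc hc0.le
        calc c0 * Real.sqrt (((n:ℝ)+3)+1)
            ≤ c0 * (Real.sqrt ((n:ℝ)+3) + 1/(2*Real.sqrt ((n:ℝ)+3))) := this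
          _ = c0*Real.sqrt ((n:ℝ)+3) + c0/(2*Real.sqrt ((n:ℝ)+3)) := by ring
      calc a (n+1) ≤ a n * Real.exp (-(c0/(2*Real.sqrt ((n:ℝ)+3)))) := ratio n
        _ ≤ ((a 0 * Real.exp (c0*Real.sqrt 3)) * Real.exp (-(c0*Real.sqrt ((n:ℝ)+3))))
            * Real.exp (-(c0/(2*Real.sqrt ((n:ℝ)+3)))) := by
            apply mul_le_mul_of_nonneg_right ih (Real.exp_pos _).le
        _ = (a 0 * Real.exp (c0*Real.sqrt 3)) *
            Real.exp (-(c0*Real.sqrt ((n:ℝ)+3)) + -(c0/(2*Real.sqrt ((n:ℝ)+3)))) := by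
            rw [mul_assoc, Real.exp_add]
        _ ≤ (a 0 * Real.exp (c0*Real.sqrt 3)) *
            Real.exp (-(c0*Real.sqrt ((((n+1:ℕ)):ℝ) + 3))) := by
            apply mul_le_mul_of_nonneg_left _ (mul_pos (hapos 0) (Real.exp_pos _)).le
            rw [Real.exp_le_exp]
            linarith
  apply Summable.of_nonneg_of_le (fun n => (hapos n).le) bound
  exact (TEA_summable_exp_sqrt hc0).mul_left _

end ell

/-- Let `ρ ∈ (0, e^{−e^e})`, `g(x) = 1/log(log(−log x))`, and let `f` be a
piecewise `C¹` uniformly expanding Markov map with two increasing full branches onto `[0,1]`,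
partition point `x₁ > ρ`, `f(0) = 0` and `f(x) = x^{1/(2−g(x))}` on `(0,ρ)`.  Then any Borel
probability measure `μ` giving each dynamical `n`-cylinder measure `2^{−n}` (e.g. the measure
of maximal entropy) satisfies `∫_{(0,1]} |log x| dμ < ∞`, i.e. `μ` is adapted with respect
to `0`. -/
theorem threshold_example_adapted
    (ρ : ℝ) (hρ : ρ ∈ Ioo (0:ℝ) (Real.exp (-Real.exp (Real.exp 1))))
    (T : PCMarkovMap) (hm : T.m = 2) (hρlt : ρ < T.pt 1)
    (hbij : ∀ i, i < 2 →
      StrictMonoOn (T.br i) (Icc (T.pt i) (T.pt (i + 1))) ∧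
      T.br i '' Icc (T.pt i) (T.pt (i + 1)) = Icc (0:ℝ) 1)
    (hf0 : T.f 0 = 0)
    (hfρ : ∀ x ∈ Ioo (0:ℝ) ρ,
      T.f x = x ^ (1 / (2 - 1 / Real.log (Real.log (-Real.log x)))))
    (μ : Measure ℝ) [IsProbabilityMeasure μ]
    (hcyl : ∀ n : ℕ, 1 ≤ n → ∀ w : ℕ → ℕ, (∀ k, k < n → w k < 2) →
      μ (T.cyl n w) = (2 : ℝ≥0∞)⁻¹ ^ n) :
    (∫⁻ y in Ioc (0:ℝ) 1, ENNReal.ofReal |Real.log y| ∂μ) < ⊤ := by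
  classical
  obtain ⟨hρ0, hρe⟩ := hρ
  have he1 : (1:ℝ) < Real.exp 1 := by have := Real.exp_one_gt_d9; linarith
  set L0 : ℝ := -Real.log ρ with hL0def
  have hL0 : Real.exp (Real.exp 1) < L0 := by
    have h := Real.log_lt_log hρ0 hρe
    rw [Real.log_exp] at h
    simp only [hL0def]; linarith
  have hL0pos : 0 < L0 := lt_trans (Real.exp_pos _) hL0
  have hellpos : ∀ n, 0 < TEA_ell L0 n := fun n => lt_trans (Real.exp_pos _) (TEA_ell_gt hL0 n)
  have hell0 : TEA_ell L0 0 = -Real.log ρ := rfl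
  -- the one-step estimate for the map
  have key : ∀ n : ℕ, ∀ x : ℝ, 0 < x → TEA_ell L0 (n+1) ≤ -Real.log x →
      0 < T.f x ∧ TEA_ell L0 n ≤ -Real.log (T.f x) := by
    intro n x hx hlx
    have hmono01 : TEA_ell L0 0 ≤ TEA_ell L0 n := TEA_ell_mono hL0 (Nat.zero_le n)
    have h01 : TEA_ell L0 0 < TEA_ell L0 (n+1) :=
      lt_of_le_of_lt hmono01 (TEA_ell_lt_succ hL0 n)
    have hxρ : x < ρ := by
      have hlog : Real.log x < Real.log ρ := by
        rw [hell0] at h01; linarith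
      calc x = Real.exp (Real.log x) := (Real.exp_log hx).symm
        _ < Real.exp (Real.log ρ) := Real.exp_lt_exp.2 hlog
        _ = ρ := Real.exp_log hρ0
    have hfx := hfρ x ⟨hx, hxρ⟩
    have hLgt : Real.exp (Real.exp 1) < -Real.log x :=
      lt_of_lt_of_le (TEA_ell_gt hL0 (n+1)) hlx
    have hBB := TEA_loglog_gt_one hLgt
    have hD : 0 < 2 - 1/Real.log (Real.log (-Real.log x)) := by
      have : 1/Real.log (Real.log (-Real.log x)) < 1 := by
        rw [div_lt_one (by linarith)]; linarith
      linarith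
    have hfpos : 0 < T.f x := by
      rw [hfx]; exact Real.rpow_pos_of_pos hx _
    refine ⟨hfpos, ?_⟩
    have hlogf : Real.log (T.f x)
        = (1 / (2 - 1 / Real.log (Real.log (-Real.log x)))) * Real.log x := by
      rw [hfx, Real.log_rpow hx]
    have heq2 : -Real.log (T.f x)
        = (-Real.log x) / (2 - 1 / Real.log (Real.log (-Real.log x))) := by
      rw [hlogf]; field_simp
    rw [heq2]
    exact TEA_step hL0 n hlx
  -- iterating the estimate
  have iter : ∀ (k n : ℕ), k ≤ n → ∀ x : ℝ, 0 < x → TEA_ell L0 n ≤ -Real.log x →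
      0 < T.f^[k] x ∧ TEA_ell L0 (n - k) ≤ -Real.log (T.f^[k] x) := by
    intro k
    induction k with
    | zero => intro n _ x hx hl; simpa using ⟨hx, hl⟩
    | succ k ih =>
      intro n hk x hx hl
      obtain ⟨hy, hly⟩ := ih n (by omega) x hx hl
      have hnk : n - k = (n - (k+1)) + 1 := by omega
      rw [hnk] at hly
      obtain ⟨h1, h2⟩ := key (n - (k+1)) _ hy hly
      rw [Function.iterate_succ_apply']
      exact ⟨h1, h2⟩
  -- inclusion into the all-zeros cylinder
  have cylsub : ∀ n : ℕ,
      Ioc (0:ℝ) (Real.exp (-(TEA_ell L0 n))) ⊆ T.cyl n (fun _ => 0) := by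
    intro n x hx
    have hx0 : 0 < x := hx.1
    have hlx : TEA_ell L0 n ≤ -Real.log x := by
      have := Real.log_le_log hx0 hx.2
      rw [Real.log_exp] at this
      linarith
    simp only [PCMarkovMap.cyl, Set.mem_iInter, Finset.mem_range, Set.mem_preimage,
      Set.mem_Ioo]
    intro k hk
    obtain ⟨hpos, hbound⟩ := iter k n hk.le x hx0 hlx
    have h1n : 1 ≤ n - k := by omega
    have hge : TEA_ell L0 1 ≤ TEA_ell L0 (n - k) := TEA_ell_mono hL0 h1n
    have h01 : TEA_ell L0 0 < TEA_ell L0 1 := TEA_ell_lt_succ hL0 0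
    have hlt : T.f^[k] x < ρ := by
      have hlog : Real.log (T.f^[k] x) < Real.log ρ := by
        rw [hell0] at h01; linarith
      calc T.f^[k] x = Real.exp (Real.log (T.f^[k] x)) := (Real.exp_log hpos).symm
        _ < Real.exp (Real.log ρ) := Real.exp_lt_exp.2 hlog
        _ = ρ := Real.exp_log hρ0
    constructor
    · rw [T.pt0]; exact hpos
    · exact lt_trans hlt hρlt
  -- measure of a small interval
  have meas : ∀ n : ℕ, 1 ≤ n →
      μ (Ioc (0:ℝ) (Real.exp (-(TEA_ell L0 n)))) ≤ (2:ℝ≥0∞)⁻¹ ^ n := by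
    intro n hn
    calc μ (Ioc (0:ℝ) (Real.exp (-(TEA_ell L0 n)))) ≤ μ (T.cyl n (fun _ => 0)) :=
          measure_mono (cylsub n)
      _ = (2:ℝ≥0∞)⁻¹ ^ n := hcyl n hn _ (fun k _ => by norm_num)
  -- the covering of (0,1]
  have cover : Ioc (0:ℝ) 1 ⊆ Ioc (Real.exp (-(TEA_ell L0 1))) 1 ∪
      ⋃ n : ℕ, Ioc (Real.exp (-(TEA_ell L0 (n+2)))) (Real.exp (-(TEA_ell L0 (n+1)))) := by
    intro y hy
    rcases lt_or_ge (Real.exp (-(TEA_ell L0 1))) y with h | h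
    · exact Or.inl ⟨h, hy.2⟩
    · right
      have h2L0 : Real.exp (Real.exp 1) < 2*L0 := by
        have := Real.exp_pos (Real.exp 1); linarith
      have hBB0 := TEA_loglog_gt_one h2L0
      have hδ : 0 < 1 - 1/Real.log (Real.log (2 * L0)) := by
        have : 1/Real.log (Real.log (2*L0)) < 1 := by
          rw [div_lt_one (by linarith)]; linarith
        linarith
      have hlog2L0pos : 0 < Real.log (2*L0) := by
        have := (Real.lt_log_iff_exp_lt (by linarith : (0:ℝ) < 2*L0)).2 h2L0
        linarith [Real.exp_pos 1]
      have lin : ∀ k : ℕ,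
          L0 + k * (L0 * (1 - 1/Real.log (Real.log (2 * L0)))) ≤ TEA_ell L0 k := by
        intro k
        induction k with
        | zero => simp [TEA_ell]
        | succ k ih =>
          have hgtk := TEA_ell_gt hL0 k
          have hellposk := hellpos k
          have hL0k : L0 ≤ TEA_ell L0 k := TEA_ell_mono hL0 (Nat.zero_le k)
          have h2k : Real.exp (Real.exp 1) < 2 * TEA_ell L0 k := by linarith
          have hBBk := TEA_loglog_gt_one h2k
          have humono : 1/Real.log (Real.log (2*TEA_ell L0 k))
              ≤ 1/Real.log (Real.log (2*L0)) := by
            apply one_div_le_one_div_of_le (by linarith)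
            apply Real.log_le_log hlog2L0pos
            exact Real.log_le_log (by linarith) (by linarith)
          have heqk : TEA_ell L0 (k+1)
              = TEA_ell L0 k * (2 - 1/Real.log (Real.log (2*TEA_ell L0 k))) := rfl
          rw [heqk]
          have hstep : TEA_ell L0 k + L0 * (1 - 1/Real.log (Real.log (2 * L0)))
              ≤ TEA_ell L0 k * (2 - 1/Real.log (Real.log (2*TEA_ell L0 k))) := by
            nlinarith
          push_cast
          nlinarith
      obtain ⟨N, hN⟩ := exists_nat_gt
        ((-Real.log y - L0) / (L0 * (1 - 1/Real.log (Real.log (2 * L0)))))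
      have hy0 : 0 < y := hy.1
      have hyN : Real.exp (-(TEA_ell L0 (N+1))) < y := by
        have hpos2 : 0 < L0 * (1 - 1/Real.log (Real.log (2 * L0))) := by positivity
        rw [div_lt_iff₀ hpos2] at hN
        have h2 : -Real.log y < TEA_ell L0 N := lt_of_lt_of_le (by nlinarith) (lin N)
        have h3 : -Real.log y < TEA_ell L0 (N+1) :=
          lt_trans h2 (TEA_ell_lt_succ hL0 N)
        calc Real.exp (-(TEA_ell L0 (N+1))) < Real.exp (Real.log y) :=
              Real.exp_lt_exp.2 (by linarith)
          _ = y := Real.exp_log hy0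
      have hex : ∃ k, Real.exp (-(TEA_ell L0 (k+1))) < y := ⟨N, hyN⟩
      have hfind := Nat.find_spec hex
      have hfind0 : Nat.find hex ≠ 0 := by
        intro h0
        rw [h0] at hfind
        exact absurd hfind (not_lt.2 h)
      obtain ⟨j, hj⟩ := Nat.exists_eq_succ_of_ne_zero hfind0
      have hupper : y ≤ Real.exp (-(TEA_ell L0 (j+1))) :=
        not_lt.1 (Nat.find_min hex (by omega))
      refine Set.mem_iUnion.2 ⟨j, ?_, hupper⟩
      have hj2 : Nat.find hex + 1 = j + 2 := by omega
      rw [hj] at hfind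
      exact hfind
  -- bounding the two pieces of the integral
  have piece0 : ∫⁻ y in Ioc (Real.exp (-(TEA_ell L0 1))) 1, ENNReal.ofReal |Real.log y| ∂μ
      ≤ ENNReal.ofReal (TEA_ell L0 1) := by
    have hb : ∀ y ∈ Ioc (Real.exp (-(TEA_ell L0 1))) 1,
        ENNReal.ofReal |Real.log y| ≤ ENNReal.ofReal (TEA_ell L0 1) := by
      intro y hy
      have hy0 : 0 < y := lt_trans (Real.exp_pos _) hy.1
      have hlogy : -(TEA_ell L0 1) < Real.log y := (Real.lt_log_iff_exp_lt hy0).2 hy.1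
      have hlogy2 : Real.log y ≤ 0 := Real.log_nonpos hy0.le hy.2
      apply ENNReal.ofReal_le_ofReal
      rw [abs_of_nonpos hlogy2]; linarith
    calc ∫⁻ y in Ioc (Real.exp (-(TEA_ell L0 1))) 1, ENNReal.ofReal |Real.log y| ∂μ
        ≤ ∫⁻ _ in Ioc (Real.exp (-(TEA_ell L0 1))) 1, ENNReal.ofReal (TEA_ell L0 1) ∂μ :=
          setLIntegral_mono measurable_const hb
      _ = ENNReal.ofReal (TEA_ell L0 1) * μ (Ioc (Real.exp (-(TEA_ell L0 1))) 1) :=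
          setLIntegral_const _ _
      _ ≤ ENNReal.ofReal (TEA_ell L0 1) * 1 := mul_le_mul_right prob_le_one _
      _ = ENNReal.ofReal (TEA_ell L0 1) := mul_one _
  have piecen : ∀ n : ℕ,
      ∫⁻ y in Ioc (Real.exp (-(TEA_ell L0 (n+2)))) (Real.exp (-(TEA_ell L0 (n+1)))),
        ENNReal.ofReal |Real.log y| ∂μ
      ≤ ENNReal.ofReal (TEA_ell L0 (n+2) * (1/2:ℝ)^(n+1)) := by
    intro n
    have hb : ∀ y ∈ Ioc (Real.exp (-(TEA_ell L0 (n+2)))) (Real.exp (-(TEA_ell L0 (n+1)))),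
        ENNReal.ofReal |Real.log y| ≤ ENNReal.ofReal (TEA_ell L0 (n+2)) := by
      intro y hy
      have hy0 : 0 < y := lt_trans (Real.exp_pos _) hy.1
      have hlogy : -(TEA_ell L0 (n+2)) < Real.log y := (Real.lt_log_iff_exp_lt hy0).2 hy.1
      have hy1 : y ≤ 1 := by
        refine le_trans hy.2 ?_
        calc Real.exp (-(TEA_ell L0 (n+1))) ≤ Real.exp 0 :=
              Real.exp_le_exp.2 (by linarith [hellpos (n+1)])
          _ = 1 := Real.exp_zero
      have hlogy2 : Real.log y ≤ 0 := Real.log_nonpos hy0.le hy1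
      apply ENNReal.ofReal_le_ofReal
      rw [abs_of_nonpos hlogy2]; linarith
    have hμ : μ (Ioc (Real.exp (-(TEA_ell L0 (n+2)))) (Real.exp (-(TEA_ell L0 (n+1)))))
        ≤ (2:ℝ≥0∞)⁻¹ ^ (n+1) := by
      calc μ (Ioc (Real.exp (-(TEA_ell L0 (n+2)))) (Real.exp (-(TEA_ell L0 (n+1)))))
          ≤ μ (Ioc 0 (Real.exp (-(TEA_ell L0 (n+1))))) :=
            measure_mono (fun y hy => ⟨lt_trans (Real.exp_pos _) hy.1, hy.2⟩)
        _ ≤ (2:ℝ≥0∞)⁻¹ ^ (n+1) := meas (n+1) (by omega)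
    calc ∫⁻ y in Ioc (Real.exp (-(TEA_ell L0 (n+2)))) (Real.exp (-(TEA_ell L0 (n+1)))),
          ENNReal.ofReal |Real.log y| ∂μ
        ≤ ∫⁻ _ in Ioc (Real.exp (-(TEA_ell L0 (n+2)))) (Real.exp (-(TEA_ell L0 (n+1)))),
            ENNReal.ofReal (TEA_ell L0 (n+2)) ∂μ :=
          setLIntegral_mono measurable_const hb
      _ = ENNReal.ofReal (TEA_ell L0 (n+2)) *
            μ (Ioc (Real.exp (-(TEA_ell L0 (n+2)))) (Real.exp (-(TEA_ell L0 (n+1))))) :=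
          setLIntegral_const _ _
      _ ≤ ENNReal.ofReal (TEA_ell L0 (n+2)) * (2:ℝ≥0∞)⁻¹ ^ (n+1) := mul_le_mul_right hμ _
      _ = ENNReal.ofReal (TEA_ell L0 (n+2) * (1/2:ℝ)^(n+1)) := by
          rw [ENNReal.ofReal_mul (le_of_lt (hellpos (n+2)))]
          congr 1
          rw [ENNReal.ofReal_pow (by norm_num : (0:ℝ) ≤ 1/2)]
          congr 1
          rw [show (1/2:ℝ) = (2:ℝ)⁻¹ from one_div 2,
            ENNReal.ofReal_inv_of_pos (by norm_num)]
          norm_num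
  -- summing up
  have hsummable := TEA_summable_a hL0
  have hnonneg : ∀ n : ℕ, 0 ≤ TEA_ell L0 (n+2) * (1/2:ℝ)^(n+1) := by
    intro n
    have := hellpos (n+2)
    positivity
  have htsum : ∑' n : ℕ, ENNReal.ofReal (TEA_ell L0 (n+2) * (1/2:ℝ)^(n+1))
      = ENNReal.ofReal (∑' n : ℕ, TEA_ell L0 (n+2) * (1/2:ℝ)^(n+1)) :=
    (ENNReal.ofReal_tsum_of_nonneg hnonneg hsummable).symm
  calc ∫⁻ y in Ioc (0:ℝ) 1, ENNReal.ofReal |Real.log y| ∂μ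
      ≤ ∫⁻ y in Ioc (Real.exp (-(TEA_ell L0 1))) 1 ∪
          ⋃ n : ℕ, Ioc (Real.exp (-(TEA_ell L0 (n+2)))) (Real.exp (-(TEA_ell L0 (n+1)))),
          ENNReal.ofReal |Real.log y| ∂μ :=
        lintegral_mono_set cover
    _ ≤ (∫⁻ y in Ioc (Real.exp (-(TEA_ell L0 1))) 1, ENNReal.ofReal |Real.log y| ∂μ) +
        ∫⁻ y in ⋃ n : ℕ, Ioc (Real.exp (-(TEA_ell L0 (n+2)))) (Real.exp (-(TEA_ell L0 (n+1)))),
          ENNReal.ofReal |Real.log y| ∂μ :=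
        lintegral_union_le _ _ _
    _ ≤ ENNReal.ofReal (TEA_ell L0 1) +
        ∑' n : ℕ, ∫⁻ y in Ioc (Real.exp (-(TEA_ell L0 (n+2)))) (Real.exp (-(TEA_ell L0 (n+1)))),
          ENNReal.ofReal |Real.log y| ∂μ :=
        add_le_add piece0 (lintegral_iUnion_le _ _)
    _ ≤ ENNReal.ofReal (TEA_ell L0 1) +
        ∑' n : ℕ, ENNReal.ofReal (TEA_ell L0 (n+2) * (1/2:ℝ)^(n+1)) :=
        add_le_add_right (ENNReal.tsum_le_tsum piecen) _
    _ = ENNReal.ofReal (TEA_ell L0 1) +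
        ENNReal.ofReal (∑' n : ℕ, TEA_ell L0 (n+2) * (1/2:ℝ)^(n+1)) := by rw [htsum]
    _ < ⊤ := by
        exact ENNReal.add_lt_top.2 ⟨ENNReal.ofReal_lt_top, ENNReal.ofReal_lt_top⟩
end

section
/- There is no sequence (x_i)_{i≥1} of real numbers with x_i ∈ (0,1) for all i, x_{i+1} < x_i for all i, lim_{i→∞} x_i = 0, and ∑_{i=1}^∞ (x_i − x_{i+1}) · x_i^{−i} ≤ 1. -/
open Set Filter Topology Finset

/-!
For `i ≥ 2` the weight `x_i^{-i}` is at least `x_2^{-2}`, since `x_i ≤ x_2 < 1`. Dropping the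
first term and telescoping, the partial sums are at least `(x_2 - x_{N+1}) / x_2^2`, which tends
to `1 / x_2 > 1`.
-/

theorem sub_div_le_sum_sub_div {f g : ℕ → ℝ} {C : ℝ} (hf : Antitone f) (hg : ∀ i, 0 < g i)
    (hgC : ∀ i, g i ≤ C) (n : ℕ) :
    (f 0 - f n) / C ≤ ∑ i ∈ range n, (f i - f (i + 1)) / g i := by
  rw [← sum_range_sub', sum_div]
  gcongr with i
  · exact sub_nonneg.2 (hf i.le_succ)
  · exact hg i
  · exact hgC i

theorem sub_div_sq_le_sum_sub_div_pow {y : ℕ → ℝ} (hy : Antitone y) (hpos : ∀ i, 0 < y i)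
    (hlt : y 0 < 1) (n : ℕ) :
    (y 0 - y n) / y 0 ^ 2 ≤ ∑ i ∈ range n, (y i - y (i + 1)) / y i ^ (i + 2) := by
  refine sub_div_le_sum_sub_div hy (fun i => pow_pos (hpos i) _) (fun i => ?_) n
  calc y i ^ (i + 2) ≤ y i ^ 2 :=
        pow_le_pow_of_le_one (hpos i).le ((hy i.zero_le).trans hlt.le) (by omega)
    _ ≤ y 0 ^ 2 := pow_le_pow_left₀ (hpos i).le (hy i.zero_le) 2

/-- There is no strictly decreasing sequence `(x_i)_{i≥1}` in `(0,1)`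
tending to `0` with `∑_{i=1}^∞ (x_i − x_{i+1}) · x_i^{−i} ≤ 1` (formulated via the partial
sums of this series of nonnegative terms). -/
theorem no_decreasing_sequence_with_bounded_weighted_sum :
    ¬ ∃ x : ℕ → ℝ,
      (∀ i, 1 ≤ i → x i ∈ Ioo (0:ℝ) 1) ∧
      (∀ i, 1 ≤ i → x (i + 1) < x i) ∧
      Tendsto x atTop (𝓝 (0:ℝ)) ∧
      (∀ N : ℕ, ∑ i ∈ Finset.range N, (x (i + 1) - x (i + 2)) / (x (i + 1)) ^ (i + 1) ≤ 1) := by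
  rintro ⟨x, hmem, hdec, hlim, hsum⟩
  set y : ℕ → ℝ := fun i => x (i + 2)
  have hy : Antitone y := (strictAnti_nat_of_succ_lt fun i => hdec (i + 2) (by omega)).antitone
  have hpos : ∀ i, 0 < y i := fun i => (hmem (i + 2) (by omega)).1
  have hy0 : y 0 < 1 := (hmem 2 (by omega)).2
  have hbound (N : ℕ) : (y 0 - y N) / y 0 ^ 2 ≤
      ∑ i ∈ range (N + 1), (x (i + 1) - x (i + 2)) / x (i + 1) ^ (i + 1) := by
    rw [sum_range_succ']
    have hfirst : 0 ≤ (x 1 - x 2) / x 1 ^ 1 :=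
      div_nonneg (sub_nonneg.2 (hdec 1 le_rfl).le) (pow_pos (hmem 1 le_rfl).1 1).le
    simpa using add_le_add (sub_div_sq_le_sum_sub_div_pow hy hpos hy0 N) hfirst
  have hlim_y : Tendsto (fun N => (y 0 - y N) / y 0 ^ 2) atTop (𝓝 ((y 0 - 0) / y 0 ^ 2)) :=
    (tendsto_const_nhds.sub (hlim.comp (tendsto_add_atTop_nat 2))).div_const _
  have hgt : 1 < (y 0 - 0) / y 0 ^ 2 := by
    rw [sub_zero, sq, div_mul_eq_div_div, div_self (hpos 0).ne', one_lt_div (hpos 0)]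
    exact hy0
  obtain ⟨N, hN⟩ := (hlim_y.eventually (lt_mem_nhds hgt)).exists
  linarith [hbound N, hsum (N + 1)]
end

section
/- Let f : [0,1] → [0,1] be a piecewise C¹ uniformly expanding Markov map with partition points 0 = x_0 < x_1 < … < x_m = 1, such that f is increasing on (0, x_1) with lim_{x→0⁺} f(x) = 0 (a fixed singularity at 0), f' is monotonic on each open partition interval, and |f'| is bounded on (δ, 1) minus the partition points for every δ > 0. Let μ be an f-invariant Borel probability measure with μ({0}) = 0 and ∫_{(0,1]} |log x| dμ(x) < ∞ (μ is adapted with respect to 0). Then ∫_{(0,1]} log |f'(x)| dμ(x) < ∞. -/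
open Set Filter MeasureTheory Topology
open scoped ENNReal

lemma PCMarkovMap.pt_le (T : PCMarkovMap) : ∀ i j, i ≤ j → j ≤ T.m → T.pt i ≤ T.pt j := by
  intro i j hij hjm
  induction j with
  | zero => simp [Nat.le_zero.mp hij]
  | succ n ih =>
    rcases Nat.lt_or_ge i (n + 1) with h | h
    · exact le_trans (ih (Nat.lt_succ_iff.mp h) (le_trans (Nat.le_succ n) hjm))
        (le_of_lt (T.pt_lt n (Nat.lt_of_succ_le hjm)))
    · have : i = n + 1 := le_antisymm hij h
      simp [this]

/-- Let `f` be a piecewise `C¹` uniformly expanding Markov map which is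
increasing on `(0, pt 1)` with `f(x) → 0` as `x → 0⁺` (a fixed singularity at `0`), whose
derivative is monotonic on each open partition interval, and with `|f'|` bounded on `(δ,1)`
minus the partition points for every `δ > 0`.  If `μ` is an `f`-invariant Borel probability
measure which is adapted with respect to `0` (i.e. `μ({0}) = 0` and
`∫_{(0,1]} |log x| dμ < ∞`), then the Lyapunov integral `∫_{(0,1]} log|f'| dμ` is finite. -/
theorem adapted_measure_finite_lyapunov_integral
    (T : PCMarkovMap)
    (hinc : StrictMonoOn T.f (Ioo 0 (T.pt 1)))
    (hlim : Tendsto T.f (𝓝[>] (0:ℝ)) (𝓝 (0:ℝ)))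
    (hdmono : ∀ i, i < T.m →
      MonotoneOn (deriv T.f) (Ioo (T.pt i) (T.pt (i + 1))) ∨
      AntitoneOn (deriv T.f) (Ioo (T.pt i) (T.pt (i + 1))))
    (hbd : ∀ δ : ℝ, 0 < δ → ∃ M : ℝ, ∀ y ∈ Ioo δ 1 \ T.ptSet, |deriv T.f y| ≤ M)
    (μ : Measure ℝ) [IsProbabilityMeasure μ] (hinv : T.Invariant μ)
    (hzero : μ {0} = 0)
    (hadapted : (∫⁻ y in Ioc (0:ℝ) 1, ENNReal.ofReal |Real.log y| ∂μ) < ⊤) :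
    (∫⁻ y in Ioc (0:ℝ) 1, ENNReal.ofReal (Real.log |deriv T.f y|) ∂μ) < ⊤ := by
  classical
  have hm := T.hm
  have hp1pos : 0 < T.pt 1 := by have := T.pt_lt 0 hm; rwa [T.pt0] at this
  have hp1le : T.pt 1 ≤ 1 := by
    have := T.pt_le 1 T.m hm le_rfl; rwa [T.ptm] at this
  set p1 := T.pt 1 with hp1def
  set δ0 := p1 / 2 with hδ0def
  have hδ0pos : 0 < δ0 := by positivity
  have hδ0lt : δ0 < p1 := by simp only [hδ0def]; linarith
  obtain ⟨M, hM⟩ := hbd δ0 hδ0pos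
  set C := Real.log (max 1 M) with hCdef
  have hCnn : 0 ≤ C := Real.log_nonneg (le_max_left 1 M)
  have hIoo01 : Ioo (T.pt 0) (T.pt (0 + 1)) = Ioo 0 p1 := by rw [T.pt0]
  have hc1 := T.f_c1 0 hm
  rw [hIoo01] at hc1
  have hdiff : ∀ y ∈ Ioo (0 : ℝ) p1, DifferentiableAt ℝ T.f y := fun y hy =>
    ((hc1.differentiableOn one_ne_zero).differentiableAt (isOpen_Ioo.mem_nhds hy))
  have hexp : ∀ y ∈ Ioo (0 : ℝ) p1, T.lam ≤ |deriv T.f y| := by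
    intro y hy
    have := T.f_exp 0 hm y (by rwa [hIoo01])
    exact this
  have hderivpos : ∀ y ∈ Ioo (0 : ℝ) p1, 0 < deriv T.f y := by
    intro y hy
    have hnn : 0 ≤ deriv T.f y := by
      have hd := (hdiff y hy).hasDerivAt
      have hs := hasDerivAt_iff_tendsto_slope.mp hd
      have hs' : Tendsto (slope T.f y) (𝓝[>] y) (𝓝 (deriv T.f y)) :=
        hs.mono_left (nhdsWithin_mono y (fun z hz => hz.ne'))
      refine ge_of_tendsto hs' ?_
      filter_upwards [Ioo_mem_nhdsGT_of_mem ⟨le_refl y, hy.2⟩] with z hz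
      have hyz : y < z := hz.1
      have hzmem : z ∈ Ioo (0 : ℝ) p1 := ⟨lt_trans hy.1 hyz, hz.2⟩
      have hfy : T.f y < T.f z := hinc hy hzmem hyz
      rw [slope_def_field]
      exact div_nonneg (by linarith) (by linarith)
    have hlam := hexp y hy
    rcases hnn.lt_or_eq with h | h
    · exact h
    · exfalso
      rw [← h, abs_zero] at hlam
      linarith [T.lam_gt]
  -- pointwise bound off partition points
  have key : ∀ y ∈ Ioc (0 : ℝ) 1, y ∉ T.ptSet →
      Real.log |deriv T.f y| ≤ C + |Real.log y| := by
    intro y hy hyp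
    have habs : 0 ≤ |Real.log y| := abs_nonneg _
    rcases le_or_gt y δ0 with hle | hgt
    · -- y near 0
      have hymem : y ∈ Ioo (0 : ℝ) p1 := ⟨hy.1, lt_of_le_of_lt hle hδ0lt⟩
      have hDpos : 0 < deriv T.f y := hderivpos y hymem
      have hmono := hdmono 0 hm
      rw [hIoo01] at hmono
      rcases hmono with hmono | hanti
      · -- monotone derivative : bounded near 0 by value at z
        set z := 3 * p1 / 4 with hzdef
        have hzmem : z ∈ Ioo (0 : ℝ) p1 := ⟨by positivity, by linarith⟩
        have hz1 : z ∈ Ioo δ0 1 := ⟨by simp only [hzdef, hδ0def]; linarith,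
          by linarith [hzmem.2, hp1le]⟩
        have hznp : z ∉ T.ptSet := by
          rintro ⟨i, him, heq⟩
          rcases Nat.eq_zero_or_pos i with h0 | h1
          · rw [h0, T.pt0] at heq
            exact absurd heq.symm (ne_of_lt hzmem.1)
          · have h2 : p1 ≤ T.pt i := T.pt_le 1 i h1 him
            rw [← heq] at h2
            linarith [hzmem.2]
        have hzM : |deriv T.f z| ≤ M := hM z ⟨hz1, hznp⟩
        have hle2 : deriv T.f y ≤ deriv T.f z := hmono hymem hzmem (by linarith [hz1.1])
        have : |deriv T.f y| ≤ max 1 M := by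
          rw [abs_of_pos hDpos]
          exact le_trans hle2 (le_trans (le_abs_self _) (le_trans hzM (le_max_right 1 M)))
        have hlog : Real.log |deriv T.f y| ≤ C :=
          Real.log_le_log (abs_pos.mpr hDpos.ne') this
        linarith
      · -- antitone derivative : MVT gives f'(y) * y ≤ 1
        set D := deriv T.f y with hDdef
        have hDy : D * y ≤ 1 := by
          by_contra hcon
          push_neg at hcon
          have hyD : 1 / D < y := by
            rw [div_lt_iff₀ hDpos]
            linarith [hcon]
          set ε := (y - 1 / D) / 2 with hεdef
          have hεpos : 0 < ε := by simp only [hεdef]; linarith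
          have hεy : ε < y := by
            simp only [hεdef]
            have h1D : 0 < 1 / D := by positivity
            linarith
          have hcont : ContinuousOn T.f (Icc ε y) :=
            hc1.continuousOn.mono (fun x hx => ⟨lt_of_lt_of_le hεpos hx.1,
              lt_of_le_of_lt hx.2 hymem.2⟩)
          have hdiff' : DifferentiableOn ℝ T.f (Ioo ε y) := fun x hx =>
            (hdiff x ⟨lt_trans hεpos hx.1, lt_trans hx.2 hymem.2⟩).differentiableWithinAt
          obtain ⟨c, hc, hceq⟩ := exists_deriv_eq_slope T.f hεy hcont hdiff'
          have hcmem : c ∈ Ioo (0 : ℝ) p1 := ⟨lt_trans hεpos hc.1, lt_trans hc.2 hymem.2⟩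
          have hDc : D ≤ deriv T.f c := hanti hcmem hymem (le_of_lt hc.2)
          have hfy1 : T.f y ≤ 1 := (T.f_maps y ⟨le_of_lt hy.1, hy.2⟩).2
          have hfε0 : 0 ≤ T.f ε := (T.f_maps ε ⟨le_of_lt hεpos, le_trans (le_of_lt hεy) hy.2⟩).1
          have hslope : D * (y - ε) ≤ T.f y - T.f ε := by
            have h2 := hDc
            rw [hceq] at h2
            calc D * (y - ε) ≤ ((T.f y - T.f ε) / (y - ε)) * (y - ε) :=
                  mul_le_mul_of_nonneg_right h2 (by linarith)
              _ = T.f y - T.f ε := div_mul_cancel₀ _ (sub_ne_zero.mpr hεy.ne')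
          have h1 : D * (y - ε) ≤ 1 := by linarith
          have hexpand : D * (y - ε) = (D * y + 1) / 2 := by
            have hD0 : D ≠ 0 := hDpos.ne'
            rw [hεdef]
            field_simp
            ring
          linarith
        have hD1y : D ≤ 1 / y := (le_div_iff₀ hy.1).mpr hDy
        have hlog : Real.log |deriv T.f y| ≤ -Real.log y := by
          rw [abs_of_pos hDpos]
          calc Real.log D ≤ Real.log (1 / y) := Real.log_le_log hDpos hD1y
            _ = -Real.log y := by rw [one_div, Real.log_inv]
        have : -Real.log y ≤ |Real.log y| := neg_le_abs _
        linarith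
    · -- y away from 0
      rcases eq_or_lt_of_le hy.2 with h1 | h1
      · exfalso; exact hyp ⟨T.m, le_rfl, by rw [h1, T.ptm]⟩
      · have hyM : |deriv T.f y| ≤ M := hM y ⟨⟨hgt, h1⟩, hyp⟩
        have hlog : Real.log |deriv T.f y| ≤ C := by
          rcases (abs_nonneg (deriv T.f y)).lt_or_eq with h | h
          · exact Real.log_le_log h (le_trans hyM (le_max_right 1 M))
          · rw [← h, Real.log_zero]; exact hCnn
        linarith
  -- integral bound
  set K : ℝ≥0∞ := ∑ i ∈ Finset.range (T.m + 1),
    ENNReal.ofReal (Real.log |deriv T.f (T.pt i)|) with hKdef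
  have hKlt : K < ⊤ :=
    ENNReal.sum_lt_top.mpr fun i _ => ENNReal.ofReal_lt_top
  set B : ℝ → ℝ≥0∞ := fun y => ENNReal.ofReal C + (ENNReal.ofReal |Real.log y| + K)
    with hBdef
  have hBmeas : Measurable B :=
    measurable_const.add ((ENNReal.measurable_ofReal.comp
      Real.measurable_log.abs).add measurable_const)
  have hpoint : ∀ y ∈ Ioc (0 : ℝ) 1,
      ENNReal.ofReal (Real.log |deriv T.f y|) ≤ B y := by
    intro y hy
    by_cases hyp : y ∈ T.ptSet
    · obtain ⟨i, him, rfl⟩ := hyp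
      have hiK : ENNReal.ofReal (Real.log |deriv T.f (T.pt i)|) ≤ K := by
        rw [hKdef]
        exact Finset.single_le_sum (f := fun j => ENNReal.ofReal
          (Real.log |deriv T.f (T.pt j)|)) (fun j _ => bot_le)
          (Finset.mem_range.mpr (Nat.lt_succ_of_le him))
      calc ENNReal.ofReal (Real.log |deriv T.f (T.pt i)|) ≤ K := hiK
        _ ≤ B (T.pt i) := le_add_self.trans (le_add_self.trans le_rfl) |>.trans le_rfl
    · have := key y hy hyp
      calc ENNReal.ofReal (Real.log |deriv T.f y|)
          ≤ ENNReal.ofReal (C + |Real.log y|) := ENNReal.ofReal_le_ofReal this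
        _ ≤ ENNReal.ofReal C + ENNReal.ofReal |Real.log y| := ENNReal.ofReal_add_le
        _ ≤ B y := by
            rw [hBdef]
            exact add_le_add le_rfl (le_add_right le_rfl)
  calc (∫⁻ y in Ioc (0:ℝ) 1, ENNReal.ofReal (Real.log |deriv T.f y|) ∂μ)
      ≤ ∫⁻ y in Ioc (0:ℝ) 1, B y ∂μ := setLIntegral_mono hBmeas hpoint
    _ = ENNReal.ofReal C * μ (Ioc (0:ℝ) 1) +
        ((∫⁻ y in Ioc (0:ℝ) 1, ENNReal.ofReal |Real.log y| ∂μ) +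
          K * μ (Ioc (0:ℝ) 1)) := by
        rw [hBdef]
        rw [lintegral_add_left measurable_const,
          lintegral_add_right _ measurable_const, setLIntegral_const,
          setLIntegral_const]
    _ < ⊤ := by
        apply ENNReal.add_lt_top.mpr
        constructor
        · exact ENNReal.mul_lt_top ENNReal.ofReal_lt_top (measure_lt_top μ _)
        · exact ENNReal.add_lt_top.mpr ⟨hadapted,
            ENNReal.mul_lt_top hKlt (measure_lt_top μ _)⟩
end
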